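/- arXiv:2408.10650 — 9 statements merged into one kernel-verified Lean document; each statement's English description precedes it below -/
import Mathlib

section
/- Let 1 ≤ p ≤ d and let f = (f₁,…,f_d) with each f_k ∈ L¹₊([0,1]) and ∫₀¹ f_k(e) de > 0. Then there exist matrices B ∈ [0,∞)^{d×p} and W ∈ [0,∞)^{p×d} with (B ⋄ W ⋄ f(e))_k = f_k(e) Lebesgue-a.e. for every k, if and only if there exist l ∈ ℕ, a matrix A ∈ [0,∞)^{d×l} having at most p ∨-linearly independent rows, and g = (g₁,…,g_l) with each g_j ∈ L¹₊([0,1]) and ∫₀¹ g_j(e) de > 0, such that f_k(e) = max_{j=1,…,l} A_{kj} g_j(e) for Lebesgue-almost every e ∈ [0,1] and every k = 1,…,d. -/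
set_option linter.unusedSectionVars false

section SupToolkit

variable {ι κ : Type*} [Finite ι] [Finite κ]

lemma hle_sup (f : ι → ℝ) (i : ι) : f i ≤ ⨆ j, f j :=
  le_ciSup (Finite.bddAbove_range f) i

lemma hsup_le {f : ι → ℝ} {L : ℝ} (hL : 0 ≤ L) (h : ∀ i, f i ≤ L) : (⨆ i, f i) ≤ L := by
  cases isEmpty_or_nonempty ι
  · simpa [Real.iSup_of_isEmpty] using hL
  · exact ciSup_le h

lemma hsup_attained [Nonempty ι] (f : ι → ℝ) : ∃ i, (⨆ j, f j) = f i := by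
  obtain ⟨i, hi⟩ := Finite.exists_max f
  exact ⟨i, le_antisymm (ciSup_le hi) (hle_sup f i)⟩

lemma hsup_zero : (⨆ _ : ι, (0:ℝ)) = 0 := by
  cases isEmpty_or_nonempty ι
  · exact Real.iSup_of_isEmpty _
  · exact ciSup_const

lemma hmul_sup (a : ℝ) (ha : 0 ≤ a) (f : ι → ℝ) : a * (⨆ i, f i) = ⨆ i, a * f i := by
  cases isEmpty_or_nonempty ι
  · simp [Real.iSup_of_isEmpty]
  · obtain ⟨i, hi⟩ := hsup_attained f
    obtain ⟨i', hi'⟩ := hsup_attained (fun i => a * f i)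
    rw [hi, hi']
    exact le_antisymm (hi' ▸ hle_sup (fun i => a * f i) i)
      (mul_le_mul_of_nonneg_left (hi ▸ hle_sup f i') ha)

lemma hsup_mul (a : ℝ) (ha : 0 ≤ a) (f : ι → ℝ) : (⨆ i, f i) * a = ⨆ i, f i * a := by
  rw [mul_comm, hmul_sup a ha f]; simp [mul_comm]

lemma hsup_swap_le (F : ι → κ → ℝ) (h0 : ∀ i j, 0 ≤ F i j) :
    (⨆ i, ⨆ j, F i j) ≤ ⨆ j, ⨆ i, F i j := by
  refine hsup_le (Real.iSup_nonneg fun j => Real.iSup_nonneg fun i => h0 i j) fun i => ?_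
  refine hsup_le (Real.iSup_nonneg fun j => Real.iSup_nonneg fun i => h0 i j) fun j => ?_
  exact (hle_sup (fun i => F i j) i).trans (hle_sup (fun j => ⨆ i, F i j) j)

lemma hsup_swap (F : ι → κ → ℝ) (h0 : ∀ i j, 0 ≤ F i j) :
    (⨆ i, ⨆ j, F i j) = ⨆ j, ⨆ i, F i j :=
  le_antisymm (hsup_swap_le F h0) (hsup_swap_le (fun j i => F i j) (fun j i => h0 i j))

lemma hsup_combine_max (u v : ι → ℝ) (hu : ∀ i, 0 ≤ u i) (hv : ∀ i, 0 ≤ v i) :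
    (⨆ i, max (u i) (v i)) = max (⨆ i, u i) (⨆ i, v i) := by
  apply le_antisymm
  · refine hsup_le (le_max_of_le_left (Real.iSup_nonneg hu)) fun i => ?_
    exact max_le_max (hle_sup u i) (hle_sup v i)
  · have hnn : (0:ℝ) ≤ ⨆ i, max (u i) (v i) :=
      Real.iSup_nonneg fun i => le_max_of_le_left (hu i)
    refine max_le (hsup_le hnn fun i => ?_) (hsup_le hnn fun i => ?_)
    · exact (le_max_left (u i) (v i)).trans (hle_sup (fun i => max (u i) (v i)) i)
    · exact (le_max_right (u i) (v i)).trans (hle_sup (fun i => max (u i) (v i)) i)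

lemma hsup_univ {κ : Type*} [Fintype κ] (h : κ → ℝ) :
    (⨆ j : (Finset.univ : Finset κ), h ↑j) = ⨆ j, h j := by
  rw [iSup, iSup]
  congr 1
  ext y
  constructor
  · rintro ⟨⟨j, _⟩, rfl⟩; exact ⟨j, rfl⟩
  · rintro ⟨j, rfl⟩; exact ⟨⟨j, Finset.mem_univ j⟩, rfl⟩

/-- split a sup over a finset at a member -/
lemma hsup_split {κ : Type*} [DecidableEq κ] (S : Finset κ) {j : κ} (hj : j ∈ S)
    (h : κ → ℝ) (h0 : ∀ i, 0 ≤ h i) :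
    (⨆ i : S, h ↑i) = max (h j) (⨆ i : (S.erase j), h ↑i) := by
  apply le_antisymm
  · refine hsup_le (le_max_of_le_left (h0 j)) fun ⟨i, hiS⟩ => ?_
    rcases eq_or_ne i j with rfl | hne
    · exact le_max_left _ _
    · exact le_max_of_le_right (hle_sup (fun i : (S.erase j) => h ↑i)
        ⟨i, Finset.mem_erase.mpr ⟨hne, hiS⟩⟩)
  · refine max_le (hle_sup (fun i : S => h ↑i) ⟨j, hj⟩) ?_
    refine hsup_le (Real.iSup_nonneg fun ⟨i, _⟩ => h0 i) fun ⟨i, hi⟩ => ?_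
    exact hle_sup (fun i : S => h ↑i) ⟨i, Finset.mem_of_mem_erase hi⟩

/-- a nonneg family supported on `S` has the same sup over the full type -/
lemma hsup_support {κ : Type*} [Fintype κ] (S : Finset κ) (h : κ → ℝ)
    (h0 : ∀ i, 0 ≤ h i) (hout : ∀ i ∉ S, h i = 0) :
    (⨆ i, h i) = ⨆ i : S, h ↑i := by
  apply le_antisymm
  · refine hsup_le (Real.iSup_nonneg fun ⟨i, _⟩ => h0 i) fun i => ?_
    by_cases hi : i ∈ S
    · exact hle_sup (fun i : S => h ↑i) ⟨i, hi⟩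
    · rw [hout i hi]; exact Real.iSup_nonneg fun ⟨i, _⟩ => h0 i
  · exact hsup_le (Real.iSup_nonneg h0) fun ⟨i, _⟩ => hle_sup h i

/-- sup of an indicator family -/
lemma hsup_indicator {κ : Type*} [Fintype κ] [DecidableEq κ] (m₀ : κ) (v : κ → ℝ)
    (hv : ∀ m, 0 ≤ v m) :
    (⨆ m, (if m = m₀ then (1:ℝ) else 0) * v m) = v m₀ := by
  apply le_antisymm
  · refine hsup_le (hv m₀) fun m => ?_
    rcases eq_or_ne m m₀ with rfl | hne
    · simp
    · simp [hne, hv m₀]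
  · simpa using hle_sup (fun m => (if m = m₀ then (1:ℝ) else 0) * v m) m₀

end SupToolkit

lemma hmax_mul (a b c : ℝ) (hc : 0 ≤ c) : max a b * c = max (a * c) (b * c) := by
  rcases le_total a b with h | h
  · rw [max_eq_right h, max_eq_right (mul_le_mul_of_nonneg_right h hc)]
  · rw [max_eq_left h, max_eq_left (mul_le_mul_of_nonneg_right h hc)]

section Cone

variable {X : Type*} {p d : ℕ}

/-- membership in the max-cone generated by rows of `G` indexed by `S` -/
def InCone (G : Fin p → X → ℝ) (S : Finset (Fin p)) (h : X → ℝ) : Prop :=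
  ∃ c : Fin p → ℝ, (∀ j, 0 ≤ c j) ∧ ∀ x, h x = ⨆ j : S, c ↑j * G ↑j x

lemma incone_subst {G : Fin p → X → ℝ} (hG0 : ∀ j x, 0 ≤ G j x) {S : Finset (Fin p)}
    {j : Fin p} (hj : j ∈ S) (hGj : InCone G (S.erase j) (G j)) {h : X → ℝ}
    (hh : InCone G S h) : InCone G (S.erase j) h := by
  obtain ⟨b, hb0, hb⟩ := hGj
  obtain ⟨c, hc0, hc⟩ := hh
  refine ⟨fun i => max (c j * b i) (c i), fun i => le_max_of_le_right (hc0 i), fun x => ?_⟩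
  have e1 : h x = max (c j * G j x) (⨆ i : (S.erase j), c ↑i * G ↑i x) := by
    rw [hc x]
    exact hsup_split S hj (fun i => c i * G i x) (fun i => mul_nonneg (hc0 i) (hG0 i x))
  have e2 : c j * G j x = ⨆ i : (S.erase j), (c j * b ↑i) * G ↑i x := by
    rw [hb x, hmul_sup (c j) (hc0 j)]
    exact iSup_congr fun i => (mul_assoc _ _ _).symm
  rw [e1, e2,
    ← hsup_combine_max (fun i : (S.erase j) => (c j * b ↑i) * G ↑i x)
      (fun i : (S.erase j) => c ↑i * G ↑i x)
      (fun i => mul_nonneg (mul_nonneg (hc0 j) (hb0 ↑i)) (hG0 ↑i x))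
      (fun i => mul_nonneg (hc0 ↑i) (hG0 ↑i x))]
  exact iSup_congr fun i => (hmax_mul _ _ _ (hG0 ↑i x)).symm

lemma prune (G : Fin p → X → ℝ) (hG0 : ∀ j x, 0 ≤ G j x) (F : Fin d → X → ℝ) :
    ∀ S : Finset (Fin p), (∀ k, InCone G S (F k)) →
      ∃ T, T ⊆ S ∧ (∀ k, InCone G T (F k)) ∧ ∀ j ∈ T, ¬ InCone G (T.erase j) (G j) := by
  intro S
  induction S using Finset.strongInductionOn with
  | _ S ih =>
    intro hS
    by_cases hex : ∃ j ∈ S, InCone G (S.erase j) (G j)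
    · obtain ⟨j, hj, hGj⟩ := hex
      obtain ⟨T, hTsub, hT⟩ := ih (S.erase j) (Finset.erase_ssubset hj)
        (fun k => incone_subst hG0 hj hGj (hS k))
      exact ⟨T, hTsub.trans (Finset.erase_subset j S), hT⟩
    · exact ⟨S, Finset.Subset.refl S, hS, fun j hj hcon => hex ⟨j, hj, hcon⟩⟩

end Cone

lemma key_lemma {X : Type*} {d p : ℕ} (hd : 0 < d)
    (F : Fin d → X → ℝ) (G : Fin p → X → ℝ)
    (hF0 : ∀ k x, 0 ≤ F k x)
    (B : Fin d → Fin p → ℝ) (W : Fin p → Fin d → ℝ)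
    (hB : ∀ k j, 0 ≤ B k j) (hW : ∀ j m, 0 ≤ W j m)
    (hFG : ∀ k x, F k x = ⨆ j, B k j * G j x)
    (hGF : ∀ j x, G j x = ⨆ m, W j m * F m x) :
    ∃ I : Finset (Fin d), I.card ≤ p ∧
      ∀ k, ∃ α : Fin d → ℝ, (∀ i, 0 ≤ α i) ∧ ∀ x, F k x = ⨆ i : I, α ↑i * F ↑i x := by
  haveI : Nonempty (Fin d) := ⟨⟨0, hd⟩⟩
  have hG0 : ∀ j x, 0 ≤ G j x := fun j x => by
    rw [hGF]; exact Real.iSup_nonneg fun m => mul_nonneg (hW j m) (hF0 m x)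
  have hinit : ∀ k, InCone G Finset.univ (F k) := fun k =>
    ⟨B k, hB k, fun x => by rw [hFG k x, ← hsup_univ (fun j => B k j * G j x)]⟩
  obtain ⟨S, -, hSF, hSmin⟩ := prune G hG0 F Finset.univ hinit
  -- each generator G j, j ∈ S, is realized by a single F m
  have hrep : ∀ j ∈ S, ∃ m : Fin d, ∀ x, G j x = W j m * F m x := by
    intro j hj
    have ht : ∀ m : Fin d, ∃ c : Fin p → ℝ, (∀ i, 0 ≤ c i) ∧
        ∀ x, W j m * F m x = ⨆ i : S, c ↑i * G ↑i x := by
      intro m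
      obtain ⟨c, hc0, hc⟩ := hSF m
      refine ⟨fun i => W j m * c i, fun i => mul_nonneg (hW j m) (hc0 i), fun x => ?_⟩
      rw [hc x, hmul_sup (W j m) (hW j m)]
      exact iSup_congr fun i => (mul_assoc _ _ _).symm
    choose c hc0 hc using ht
    set γ : Fin p → ℝ := fun i => ⨆ m, c m i with hγdef
    have hγ0 : ∀ i, 0 ≤ γ i := fun i => Real.iSup_nonneg fun m => hc0 m i
    have hGjγ : ∀ x, G j x = ⨆ i : S, γ ↑i * G ↑i x := by
      intro x
      rw [hGF j x]
      calc (⨆ m, W j m * F m x) = ⨆ m, ⨆ i : S, c m ↑i * G ↑i x :=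
            iSup_congr fun m => hc m x
        _ = ⨆ i : S, ⨆ m, c m ↑i * G ↑i x :=
            hsup_swap _ (fun m i => mul_nonneg (hc0 m ↑i) (hG0 ↑i x))
        _ = ⨆ i : S, γ ↑i * G ↑i x :=
            iSup_congr fun i => (hsup_mul (G ↑i x) (hG0 ↑i x) (fun m => c m ↑i)).symm
    by_cases hγj : γ j < 1
    · exfalso
      apply hSmin j hj
      refine ⟨γ, hγ0, fun x => ?_⟩
      have heq : G j x = max (γ j * G j x) (⨆ i : (S.erase j), γ ↑i * G ↑i x) :=
        (hGjγ x).trans (hsup_split S hj (fun i => γ i * G i x)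
          (fun i => mul_nonneg (hγ0 i) (hG0 i x)))
      have hR0 : 0 ≤ ⨆ i : (S.erase j), γ ↑i * G ↑i x :=
        Real.iSup_nonneg fun i => mul_nonneg (hγ0 ↑i) (hG0 ↑i x)
      rcases (hG0 j x).lt_or_eq with hpos | hzero
      · rcases max_choice (γ j * G j x) (⨆ i : (S.erase j), γ ↑i * G ↑i x) with h | h
        · rw [h] at heq
          nlinarith
        · rw [h] at heq; exact heq
      · have h1 : (⨆ i : (S.erase j), γ ↑i * G ↑i x) ≤ G j x :=
          heq ▸ le_max_right _ _
        rw [← hzero] at h1 ⊢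
        exact (le_antisymm h1 hR0).symm
    · push_neg at hγj
      obtain ⟨m₀, hm₀⟩ := Finite.exists_max (fun m => c m j)
      have hγm : γ j = c m₀ j := le_antisymm (ciSup_le hm₀) (hle_sup (fun m => c m j) m₀)
      refine ⟨m₀, fun x => ?_⟩
      have hfix : γ j * G j x = G j x := by
        have h1 : γ j * G j x ≤ G j x := by
          conv_rhs => rw [hGjγ x]
          exact hle_sup (fun i : S => γ ↑i * G ↑i x) ⟨j, hj⟩
        exact le_antisymm h1 (le_mul_of_one_le_left (hG0 j x) hγj)
      apply le_antisymm
      · calc G j x = γ j * G j x := hfix.symm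
          _ = c m₀ j * G j x := by rw [hγm]
          _ ≤ ⨆ i : S, c m₀ ↑i * G ↑i x := hle_sup (fun i : S => c m₀ ↑i * G ↑i x) ⟨j, hj⟩
          _ = W j m₀ * F m₀ x := (hc m₀ x).symm
      · conv_rhs => rw [hGF j x]
        exact hle_sup (fun m => W j m * F m x) m₀
  choose! m hm using hrep
  refine ⟨S.image m, Finset.card_image_le.trans ((Finset.card_le_univ S).trans (by simp)), ?_⟩
  intro k
  obtain ⟨c, hc0, hc⟩ := hSF k
  set α : Fin d → ℝ := fun i => ⨆ jj : {j : Fin p // j ∈ S ∧ m j = i}, c ↑jj * W ↑jj (m ↑jj)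
    with hαdef
  have hα0 : ∀ i, 0 ≤ α i :=
    fun i => Real.iSup_nonneg fun jj => mul_nonneg (hc0 ↑jj) (hW ↑jj (m ↑jj))
  refine ⟨α, hα0, fun x => ?_⟩
  have e1 : F k x = ⨆ j : S, (c ↑j * W ↑j (m ↑j)) * F (m ↑j) x := by
    rw [hc x]
    refine iSup_congr fun ⟨j, hjS⟩ => ?_
    rw [hm j hjS x, mul_assoc]
  rw [e1]
  have hRnn : 0 ≤ ⨆ i : (S.image m), α ↑i * F ↑i x :=
    Real.iSup_nonneg fun i => mul_nonneg (hα0 ↑i) (hF0 ↑i x)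
  have hLnn : 0 ≤ ⨆ j : S, (c ↑j * W ↑j (m ↑j)) * F (m ↑j) x :=
    Real.iSup_nonneg fun j => mul_nonneg (mul_nonneg (hc0 ↑j) (hW ↑j (m ↑j))) (hF0 (m ↑j) x)
  apply le_antisymm
  · refine hsup_le hRnn fun ⟨j, hjS⟩ => ?_
    have h1 : c j * W j (m j) ≤ α (m j) := by
      rw [hαdef]
      exact hle_sup (fun jj : {j' : Fin p // j' ∈ S ∧ m j' = m j} => c ↑jj * W ↑jj (m ↑jj))
        ⟨j, hjS, rfl⟩
    calc (c j * W j (m j)) * F (m j) x ≤ α (m j) * F (m j) x :=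
          mul_le_mul_of_nonneg_right h1 (hF0 (m j) x)
      _ ≤ ⨆ i : (S.image m), α ↑i * F ↑i x :=
          hle_sup (fun i : (S.image m) => α ↑i * F ↑i x) ⟨m j, Finset.mem_image_of_mem m hjS⟩
  · refine hsup_le hLnn fun ⟨i, hi⟩ => ?_
    have e2 : α i * F i x = ⨆ jj : {j : Fin p // j ∈ S ∧ m j = i},
        (c ↑jj * W ↑jj (m ↑jj)) * F i x := by
      rw [hαdef]
      exact hsup_mul (F i x) (hF0 i x) _
    rw [e2]
    refine hsup_le hLnn fun ⟨j, hjS, hji⟩ => ?_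
    have : (c j * W j (m j)) * F i x = (c j * W j (m j)) * F (m j) x := by rw [hji]
    rw [this]
    exact hle_sup (fun j : S => (c ↑j * W ↑j (m ↑j)) * F (m ↑j) x) ⟨j, hjS⟩



open MeasureTheory

/-- Lebesgue measure restricted to `[0,1]`. -/
noncomputable abbrev mu01 : Measure ℝ := volume.restrict (Set.Icc (0:ℝ) 1)

/-- Max-linear action of a nonnegative matrix on a vector:
`(H ⋄ x) i = max_l H i l * x l`. -/
noncomputable def maxVec {p d : ℕ} (H : Fin p → Fin d → ℝ) (x : Fin d → ℝ) : Fin p → ℝ :=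
  fun i => ⨆ l, H i l * x l

/-- `A` has at most `p` ∨-linearly independent rows: there is a set `I` of at
most `p` row indices such that every row of `A` is a max-linear combination
(with nonnegative coefficients) of the rows indexed by `I`. -/
def AtMostIndepRows {d l : ℕ} (p : ℕ) (A : Fin d → Fin l → ℝ) : Prop :=
  ∃ I : Finset (Fin d), I.card ≤ p ∧
    ∀ k : Fin d, ∃ α : Fin d → ℝ, (∀ i, 0 ≤ α i) ∧
      ∀ j : Fin l, A k j = ⨆ i : I, α ↑i * A ↑i j

/-- Corollary 1 of the paper: a max-stable vector with spectral functions `f`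
is perfectly reconstructable by max-stable PCA with `p` components iff its
spectral functions arise from a nonnegative matrix `A` with at most `p`
∨-linearly independent rows applied max-linearly to spectral functions
`g₁, …, g_l` of an `l`-variate max-stable vector with non-degenerate margins. -/
theorem maxstablePCA_perfect_reconstruction_iff_maxlinear_factor
    {p d : ℕ} (hp : 1 ≤ p) (hpd : p ≤ d)
    (f : Fin d → ℝ → ℝ)
    (hf_int : ∀ k, IntegrableOn (f k) (Set.Icc (0:ℝ) 1))
    (hf_nonneg : ∀ k x, 0 ≤ f k x)
    (hf_pos : ∀ k, 0 < ∫ x in Set.Icc (0:ℝ) 1, f k x) :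
    (∃ (B : Fin d → Fin p → ℝ) (W : Fin p → Fin d → ℝ),
        (∀ i j, 0 ≤ B i j) ∧ (∀ i j, 0 ≤ W i j) ∧
        ∀ k, ∀ᵐ e ∂mu01, maxVec B (maxVec W (fun l => f l e)) k = f k e)
    ↔
    (∃ (l : ℕ) (A : Fin d → Fin l → ℝ) (g : Fin l → ℝ → ℝ),
        (∀ k j, 0 ≤ A k j) ∧
        AtMostIndepRows p A ∧
        (∀ j, IntegrableOn (g j) (Set.Icc (0:ℝ) 1)) ∧
        (∀ j x, 0 ≤ g j x) ∧
        (∀ j, 0 < ∫ x in Set.Icc (0:ℝ) 1, g j x) ∧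
        ∀ k, ∀ᵐ e ∂mu01, f k e = ⨆ j : Fin l, A k j * g j e) := by
  classical
  have hd : 0 < d := lt_of_lt_of_le hp hpd
  constructor
  · rintro ⟨B, W, hB, hW, hae⟩
    have haeall : ∀ᵐ e ∂mu01, ∀ k, maxVec B (maxVec W (fun l => f l e)) k = f k e :=
      ae_all_iff.mpr hae
    obtain ⟨I, hIcard, hspan⟩ := key_lemma (X := {e : ℝ // ∀ k,
        maxVec B (maxVec W (fun l => f l e)) k = f k e}) hd
      (fun k x => f k ↑x) (fun j x => maxVec W (fun l => f l ↑x) j)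
      (fun k x => hf_nonneg k ↑x) B W hB hW
      (fun k x => (x.2 k).symm) (fun j x => rfl)
    choose α hα0 hαeq using hspan
    set α' : Fin d → Fin d → ℝ :=
      fun k => if k ∈ I then (fun j => if j = k then 1 else 0) else α k with hα'def
    have hα'0 : ∀ k i, 0 ≤ α' k i := by
      intro k i
      rw [hα'def]
      by_cases hk : k ∈ I <;> simp [hk]
      · positivity
      · exact hα0 k i
    set A : Fin d → Fin d → ℝ := fun k j => if j ∈ I then α' k j else 0 with hAdef
    have hA0 : ∀ k j, 0 ≤ A k j := by
      intro k j; rw [hAdef]; by_cases hj : j ∈ I <;> simp [hj, hα'0 k j]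
    -- pointwise identity on the good set
    have hkey : ∀ k, ∀ e, (∀ k', maxVec B (maxVec W (fun l => f l e)) k' = f k' e) →
        f k e = ⨆ i : I, α' k i * f ↑i e := by
      intro k e he
      by_cases hk : k ∈ I
      · have : ∀ i : I, α' k ↑i * f ↑i e =
            (if i = (⟨k, hk⟩ : I) then (1:ℝ) else 0) * f ↑i e := by
          intro i
          rw [hα'def]
          simp only [if_pos hk]
          congr 1
          by_cases h : (↑i : Fin d) = k
          · rw [if_pos h, if_pos (Subtype.ext h)]
          · rw [if_neg h, if_neg (fun hc => h (by rw [hc]))]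
        rw [iSup_congr this, hsup_indicator (⟨k, hk⟩ : I) (fun i : I => f ↑i e)
          (fun i => hf_nonneg ↑i e)]
      · have := hαeq k ⟨e, he⟩
        rw [hα'def]
        simp only [if_neg hk]
        exact this
    refine ⟨d, A, f, hA0, ⟨I, hIcard, ?_⟩, hf_int, hf_nonneg, hf_pos, ?_⟩
    · intro k
      refine ⟨α' k, hα'0 k, fun j => ?_⟩
      by_cases hj : j ∈ I
      · have hAij : ∀ i : I, A ↑i j = if j = ↑i then (1:ℝ) else 0 := by
          intro i
          rw [hAdef]
          simp only [if_pos hj]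
          rw [hα'def]
          simp only [if_pos i.2]
        have hterm : ∀ i : I, α' k ↑i * A ↑i j =
            (if i = (⟨j, hj⟩ : I) then (1:ℝ) else 0) * α' k ↑i := by
          intro i
          rw [hAij i]
          by_cases h : j = (↑i : Fin d)
          · rw [if_pos h, if_pos (Subtype.ext h.symm)]
            have : (↑i : Fin d) = j := h.symm
            rw [this]; ring
          · rw [if_neg h, if_neg (fun hc => h (by rw [hc]))]
            ring
        rw [iSup_congr hterm, hsup_indicator (⟨j, hj⟩ : I) (fun i : I => α' k ↑i)
          (fun i => hα'0 k ↑i)]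
        rw [hAdef]
        simp [hj]
      · have : ∀ i : I, α' k ↑i * A ↑i j = 0 := by
          intro i
          rw [hAdef]
          simp [hj]
        rw [iSup_congr this, hsup_zero, hAdef]
        simp [hj]
    · intro k
      filter_upwards [haeall] with e he
      have h1 := hkey k e he
      have h2 : (⨆ j : Fin d, A k j * f j e) = ⨆ j : I, A k ↑j * f ↑j e :=
        hsup_support I (fun j => A k j * f j e)
          (fun j => mul_nonneg (hA0 k j) (hf_nonneg j e))
          (fun j hjn => by rw [hAdef]; simp [hjn])
      have h3 : ∀ j : I, A k ↑j * f ↑j e = α' k ↑j * f ↑j e := by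
        intro j; rw [hAdef]; simp [j.2]
      rw [h1, h2, iSup_congr h3]
  · rintro ⟨l, A, g, hA0, ⟨I, hIcard, hspan⟩, hgint, hg0, hgpos, hae⟩
    choose α hα0 hαA using hspan
    set q := I.card with hq
    have hqp : q ≤ p := hIcard
    set σ : Fin q ≃o I := I.orderIsoOfFin rfl with hσ
    refine ⟨fun k j => if h : (j:ℕ) < q then α k ↑(σ ⟨j, h⟩) else 0,
      fun j mm => if h : (j:ℕ) < q then (if mm = ↑(σ ⟨j, h⟩) then 1 else 0) else 0,
      ?_, ?_, ?_⟩
    · intro k j; by_cases h : (j:ℕ) < q <;> simp [h]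
      exact hα0 k _
    · intro j mm; by_cases h : (j:ℕ) < q <;> simp [h]
      positivity
    · intro k
      have haeall : ∀ᵐ e ∂mu01, ∀ k', f k' e = ⨆ j : Fin l, A k' j * g j e :=
        ae_all_iff.mpr hae
      filter_upwards [haeall] with e he
      -- step 1 : inner maxVec
      have hWval : ∀ j : Fin p, maxVec
          (fun j mm => if h : (j:ℕ) < q then (if mm = ↑(σ ⟨j, h⟩) then (1:ℝ) else 0) else 0)
          (fun m => f m e) j = if h : (j:ℕ) < q then f ↑(σ ⟨j, h⟩) e else 0 := by
        intro j
        by_cases h : (j:ℕ) < q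
        · rw [dif_pos h]
          show (⨆ m, (if h' : (j:ℕ) < q then (if m = ↑(σ ⟨j, h'⟩) then (1:ℝ) else 0) else 0)
              * f m e) = _
          simp only [dif_pos h]
          exact hsup_indicator ↑(σ ⟨j, h⟩) (fun m => f m e) (fun m => hf_nonneg m e)
        · rw [dif_neg h]
          show (⨆ m, (if h' : (j:ℕ) < q then (if m = ↑(σ ⟨j, h'⟩) then (1:ℝ) else 0) else 0)
              * f m e) = _
          simp only [dif_neg h]
          simpa using hsup_zero (ι := Fin d)
      -- step 2 : outer maxVec
      have h2 : maxVec (fun (k : Fin d) (j : Fin p) => if h : (j:ℕ) < q then α k ↑(σ ⟨j, h⟩) else 0)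
          (maxVec (fun (j : Fin p) (mm : Fin d) => if h : (j:ℕ) < q then
            (if mm = ↑(σ ⟨j, h⟩) then (1:ℝ) else 0) else 0) (fun m => f m e)) k
          = ⨆ i : I, α k ↑i * f ↑i e := by
        show (⨆ j : Fin p, (if h : (j:ℕ) < q then α k ↑(σ ⟨j, h⟩) else 0) * _) = _
        have hTnn : (0:ℝ) ≤ ⨆ i : I, α k ↑i * f ↑i e :=
          Real.iSup_nonneg fun i => mul_nonneg (hα0 k ↑i) (hf_nonneg ↑i e)
        apply le_antisymm
        · refine hsup_le hTnn fun j => ?_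
          rw [hWval j]
          by_cases h : (j:ℕ) < q
          · simp only [dif_pos h]
            exact hle_sup (fun i : I => α k ↑i * f ↑i e) ⟨↑(σ ⟨j, h⟩), (σ ⟨j, h⟩).2⟩
          · simp only [dif_neg h]
            simpa using hTnn
        · refine hsup_le (Real.iSup_nonneg fun j => ?_) fun ⟨i, hi⟩ => ?_
          · refine mul_nonneg ?_ ?_
            · by_cases h : (j:ℕ) < q <;> simp [h, hα0]
            · rw [hWval j]
              by_cases h : (j:ℕ) < q <;> simp [h, hf_nonneg]
          · set t : Fin q := σ.symm ⟨i, hi⟩ with ht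
            have htq : (t:ℕ) < q := t.isLt
            have hjp : (t:ℕ) < p := lt_of_lt_of_le htq hqp
            have hσt : ↑(σ ⟨(t:ℕ), htq⟩) = i := by
              have : (⟨(t:ℕ), htq⟩ : Fin q) = t := rfl
              rw [this, ht]
              simp
            have := hle_sup (fun j : Fin p => (if h : (j:ℕ) < q then α k ↑(σ ⟨j, h⟩) else 0) *
              (maxVec (fun (j : Fin p) (mm : Fin d) => if h : (j:ℕ) < q then
                (if mm = ↑(σ ⟨j, h⟩) then (1:ℝ) else 0) else 0) (fun m => f m e) j))
              ⟨(t:ℕ), hjp⟩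
            refine le_trans (le_of_eq ?_) this
            rw [hWval ⟨(t:ℕ), hjp⟩]
            simp only [dif_pos htq, hσt]
      rw [h2]
      -- step 3
      calc (⨆ i : I, α k ↑i * f ↑i e)
          = ⨆ i : I, α k ↑i * ⨆ j : Fin l, A ↑i j * g j e :=
            iSup_congr fun i => by rw [he ↑i]
        _ = ⨆ i : I, ⨆ j : Fin l, α k ↑i * (A ↑i j * g j e) :=
            iSup_congr fun i => hmul_sup (α k ↑i) (hα0 k ↑i) _
        _ = ⨆ j : Fin l, ⨆ i : I, α k ↑i * (A ↑i j * g j e) :=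
            hsup_swap _ (fun i j => mul_nonneg (hα0 k ↑i)
              (mul_nonneg (hA0 ↑i j) (hg0 j e)))
        _ = ⨆ j : Fin l, (⨆ i : I, α k ↑i * A ↑i j) * g j e := by
            refine iSup_congr fun j => ?_
            rw [hsup_mul (g j e) (hg0 j e)]
            exact iSup_congr fun i => (mul_assoc _ _ _).symm
        _ = ⨆ j : Fin l, A k j * g j e := iSup_congr fun j => by rw [← hαA k j]
        _ = f k e := (he k).symm
end

section
/- Let (Ω, 𝒜, P) be a probability space, let S be a finite Borel measure on S^{d-1}_+, and let (Ŝ_n)_{n∈ℕ} be random finite Borel measures on S^{d-1}_+ defined on (Ω, 𝒜, P) such that for every continuous f: S^{d-1}_+ → ℝ the random variables ∫ f(a) Ŝ_n(da) converge in probability to ∫ f(a) S(da). Let K ⊆ ℝ^m be a nonempty compact set and c: K × S^{d-1}_+ → ℝ a continuous function. Then for any sequence of random elements θ̂_n: Ω → K satisfying ∫ c(θ̂_n(ω), a) Ŝ_n(ω)(da) = inf_{θ∈K} ∫ c(θ, a) Ŝ_n(ω)(da) for all ω and n, the random variables ∫ c(θ̂_n, a) S(da) converge in probability to inf_{θ∈K}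 ∫ c(θ, a) S(da) as n → ∞. -/
/-!
Since `c` is uniformly continuous on the compact set `K × S^{d-1}_+`, the functions `c(θ, ·)`,
`θ ∈ K`, all lie uniformly within `η` of finitely many continuous test functions. Convergence in
probability of the integrals of these test functions and of the constant `1` (which controls the
total mass of `Ŝ_n`) therefore gives `sup_θ |Ŝ_n c(θ, ·) - S c(θ, ·)| → 0` in probability. An
exact minimizer of the empirical risk is then a `2 sup_θ |…|`-approximate minimizer of the true
risk. Compactness of `S^{d-1}_+` holds because `N` is a norm on a finite-dimensional space.
-/

open MeasureTheory Filter

/-- The positive unit sphere `S^{d-1}_+ = {x ∈ [0,∞)^d : ‖x‖ = 1}` for a norm `N` on `ℝ^d`. -/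
abbrev PosSphere (d : ℕ) (N : (Fin d → ℝ) → ℝ) : Type :=
  {x : Fin d → ℝ // (∀ i, 0 ≤ x i) ∧ N x = 1}

open Set Topology

namespace Seminorm

variable {E : Type*} [NormedAddCommGroup E] [NormedSpace ℝ E] [FiniteDimensional ℝ E]

protected theorem continuous_of_finiteDimensional (p : Seminorm ℝ E) : Continuous p :=
  p.convexOn.locallyLipschitz.continuous

theorem exists_pos_mul_norm_le (p : Seminorm ℝ E) (hp : ∀ x, p x = 0 → x = 0) :
    ∃ δ > 0, ∀ x, δ * ‖x‖ ≤ p x := by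
  rcases subsingleton_or_nontrivial E with hE | hE
  · exact ⟨1, one_pos, fun x => by simp [Subsingleton.elim x 0]⟩
  obtain ⟨z, hz, hmin⟩ := (isCompact_sphere (0 : E) 1).exists_isMinOn
    (NormedSpace.sphere_nonempty.2 zero_le_one) p.continuous_of_finiteDimensional.continuousOn
  have hz0 : z ≠ 0 := ne_zero_of_mem_unit_sphere ⟨z, hz⟩
  refine ⟨p z, (apply_nonneg p z).lt_of_ne fun h => hz0 (hp z h.symm), fun x => ?_⟩
  rcases eq_or_ne x 0 with rfl | hx
  · simp
  have hu : ‖x‖⁻¹ • x ∈ Metric.sphere (0 : E) 1 := by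
    simp [norm_smul, inv_mul_cancel₀ (norm_ne_zero_iff.2 hx)]
  calc p z * ‖x‖ ≤ p (‖x‖⁻¹ • x) * ‖x‖ := by gcongr; exact hmin hu
    _ = p x := by
      rw [map_smul_eq_mul, norm_inv, norm_norm, mul_comm, ← mul_assoc,
        mul_inv_cancel₀ (norm_ne_zero_iff.2 hx), one_mul]

theorem isCompact_closedBall_of_definite (p : Seminorm ℝ E) (hp : ∀ x, p x = 0 → x = 0)
    (x : E) (r : ℝ) : IsCompact (p.closedBall x r) := by
  obtain ⟨δ, hδ, hle⟩ := p.exists_pos_mul_norm_le hp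
  refine (isCompact_closedBall x (r / δ)).of_isClosed_subset ?_ fun y hy => ?_
  · exact isClosed_le (p.continuous_of_finiteDimensional.comp (continuous_id.sub continuous_const))
      continuous_const
  · rw [Seminorm.mem_closedBall] at hy
    rw [Metric.mem_closedBall, dist_eq_norm, le_div_iff₀' hδ]
    exact (hle _).trans hy

end Seminorm

theorem compactSpace_posSphere {d : ℕ} (N : (Fin d → ℝ) → ℝ)
    (hN_tri : ∀ x y, N (x + y) ≤ N x + N y) (hN_smul : ∀ (c : ℝ) (x), N (c • x) = |c| * N x)
    (hN_def : ∀ x, N x = 0 → x = 0) : CompactSpace (PosSphere d N) := by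
  let p : Seminorm ℝ (Fin d → ℝ) := .of N hN_tri (by simpa only [Real.norm_eq_abs] using hN_smul)
  refine isCompact_iff_compactSpace.1 <|
    (p.isCompact_closedBall_of_definite hN_def 0 1).of_isClosed_subset ?_ ?_
  · exact isClosed_Ici.inter (isClosed_eq p.continuous_of_finiteDimensional continuous_const)
  · exact fun x hx => (p.mem_closedBall_zero).2 hx.2.le

theorem dist_iInf_le_of_forall_dist_le {ι : Type*} {f g : ι → ℝ} {D : ℝ} {t₀ : ι}
    (hfg : ∀ t, dist (f t) (g t) ≤ D) (hmin : ∀ t, g t₀ ≤ g t) :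
    dist (f t₀) (⨅ t, f t) ≤ 2 * D := by
  have hclose : ∀ t, |f t - g t| ≤ D := hfg
  have hbdd : BddBelow (range f) := ⟨g t₀ - D, by
    rintro _ ⟨t, rfl⟩
    linarith [hmin t, (abs_le.1 (hclose t)).1]⟩
  have hlow : f t₀ - 2 * D ≤ ⨅ t, f t := by
    have : Nonempty ι := ⟨t₀⟩
    refine le_ciInf fun t => ?_
    linarith [hmin t, (abs_le.1 (hclose t)).1, (abs_le.1 (hclose t₀)).2]
  rw [Real.dist_eq, abs_of_nonneg (sub_nonneg.2 (ciInf_le hbdd t₀))]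
  linarith

theorem tendsto_measure_exists_le_dist_of_tendstoInMeasure {κ ι α E : Type*}
    [MeasurableSpace α] {μ : Measure α} [PseudoMetricSpace E] {l : Filter ι} (s : Finset κ)
    {f : κ → ι → α → E} {g : κ → α → E} (hf : ∀ j ∈ s, TendstoInMeasure μ (f j) l (g j))
    {ε : ℝ} (hε : 0 < ε) :
    Tendsto (fun n => μ {x | ∃ j ∈ s, ε ≤ dist (f j n x) (g j x)}) l (𝓝 0) := by
  have hsum : Tendsto (fun n => ∑ j ∈ s, μ {x | ε ≤ dist (f j n x) (g j x)}) l (𝓝 0) := by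
    simpa using tendsto_finsetSum s fun j hj => tendstoInMeasure_iff_dist.1 (hf j hj) ε hε
  refine tendsto_of_tendsto_of_tendsto_of_le_of_le tendsto_const_nhds hsum (fun _ => zero_le)
    fun n => ?_
  calc μ {x | ∃ j ∈ s, ε ≤ dist (f j n x) (g j x)}
      = μ (⋃ j ∈ s, {x | ε ≤ dist (f j n x) (g j x)}) := by congr 1; ext; simp
    _ ≤ _ := measure_biUnion_finset_le s _

theorem dist_integral_le_dist_integral_add {X : Type*} [MeasurableSpace X] {ν μ : Measure X}
    [IsFiniteMeasure ν] [IsFiniteMeasure μ] {f g : X → ℝ} {η : ℝ}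
    (hfν : Integrable f ν) (hgν : Integrable g ν) (hfμ : Integrable f μ) (hgμ : Integrable g μ)
    (hfg : ∀ a, dist (f a) (g a) ≤ η) :
    dist (∫ a, f a ∂ν) (∫ a, f a ∂μ) ≤
      dist (∫ a, g a ∂ν) (∫ a, g a ∂μ) + η * (ν.real univ + μ.real univ) := by
  have hbound : ∀ ρ : Measure X, [IsFiniteMeasure ρ] → Integrable f ρ → Integrable g ρ →
      dist (∫ a, f a ∂ρ) (∫ a, g a ∂ρ) ≤ η * ρ.real univ := fun ρ _ hf hg => by
    rw [dist_eq_norm, ← integral_sub hf hg]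
    exact norm_integral_le_of_norm_le_const
      (.of_forall fun a => by rw [← dist_eq_norm]; exact hfg a)
  calc dist (∫ a, f a ∂ν) (∫ a, f a ∂μ)
      ≤ dist (∫ a, f a ∂ν) (∫ a, g a ∂ν) + dist (∫ a, g a ∂ν) (∫ a, g a ∂μ)
        + dist (∫ a, g a ∂μ) (∫ a, f a ∂μ) := dist_triangle4 _ _ _ _
    _ ≤ η * ν.real univ + dist (∫ a, g a ∂ν) (∫ a, g a ∂μ) + η * μ.real univ := by
      rw [dist_comm (∫ a, g a ∂μ)]
      gcongr
      exacts [hbound ν hfν hgν, hbound μ hfμ hgμ]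
    _ = _ := by ring

section UniformConvergence

variable {T X : Type*} [TopologicalSpace T] [CompactSpace T] [TopologicalSpace X] [CompactSpace X]
  [MeasurableSpace X]

theorem ContinuousMap.integrable_of_compactSpace [OpensMeasurableSpace X] (f : C(X, ℝ))
    (μ : Measure X) [IsFiniteMeasure μ] : Integrable f μ :=
  f.continuous.integrable_of_hasCompactSupport (HasCompactSupport.of_compactSpace f)

theorem bddBelow_range_integral (c : C(T × X, ℝ)) (ν : Measure X) [IsFiniteMeasure ν] :
    BddBelow (range fun t => ∫ a, c (t, a) ∂ν) := by
  refine ⟨-(‖c‖ * ν.real univ), ?_⟩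
  rintro _ ⟨t, rfl⟩
  exact neg_le_of_abs_le (norm_integral_le_of_norm_le_const
    (.of_forall fun a => c.norm_coe_le_norm (t, a)))

theorem tendsto_measure_exists_le_dist_integral [OpensMeasurableSpace X]
    {Ω ι : Type*} [MeasurableSpace Ω] {P : Measure Ω} {l : Filter ι}
    {μs : ι → Ω → Measure X} (hμs : ∀ n ω, IsFiniteMeasure (μs n ω))
    {μ : Measure X} [IsFiniteMeasure μ]
    (hconv : ∀ f : C(X, ℝ),
      TendstoInMeasure P (fun n ω => ∫ a, f a ∂(μs n ω)) l (fun _ => ∫ a, f a ∂μ))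
    (c : C(T × X, ℝ)) {ε : ℝ} (hε : 0 < ε) :
    Tendsto (fun n => P {ω | ∃ t, ε ≤ dist (∫ a, c (t, a) ∂(μs n ω)) (∫ a, c (t, a) ∂μ)})
      l (𝓝 0) := by
  classical
  set m := μ.real univ
  have hden : 0 < 4 * m + ε := by positivity
  -- chosen so that `η * (2 * m + ε / 2) = ε / 2`
  set η := ε / (4 * m + ε)
  have hη : 0 < η := div_pos hε hden
  -- `t ↦ c (t, ·)` has compact range in `C(X, ℝ)`, so a finite `η`-net `G` of test functions
  obtain ⟨G, hG, hcover⟩ := Metric.totallyBounded_iff.1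
    (isCompact_range c.curry.continuous).totallyBounded η hη
  refine tendsto_of_tendsto_of_tendsto_of_le_of_le tendsto_const_nhds
    (tendsto_measure_exists_le_dist_of_tendstoInMeasure (insert 1 hG.toFinset)
      (fun f _ => hconv f) (half_pos hε)) (fun _ => zero_le) fun n => measure_mono ?_
  intro ω
  simp only [mem_ofPred_eq]
  contrapose!
  intro hsmall t
  have := hμs n ω
  have hmass : (μs n ω).real univ < m + ε / 2 := by
    have := hsmall 1 (Finset.mem_insert_self _ _)
    simp only [ContinuousMap.one_apply, integral_const, smul_eq_mul, mul_one] at this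
    linarith [(abs_lt.1 this).2]
  obtain ⟨g, hgG, hcg⟩ := mem_iUnion₂.1 (hcover ⟨t, rfl⟩)
  have hpoint : ∀ a, dist (c (t, a)) (g a) ≤ η := fun a =>
    (ContinuousMap.dist_apply_le_dist a).trans (Metric.mem_ball.1 hcg).le
  calc dist (∫ a, c (t, a) ∂(μs n ω)) (∫ a, c (t, a) ∂μ)
      ≤ dist (∫ a, g a ∂(μs n ω)) (∫ a, g a ∂μ) + η * ((μs n ω).real univ + m) :=
        dist_integral_le_dist_integral_add ((c.curry t).integrable_of_compactSpace _)
          (g.integrable_of_compactSpace _) ((c.curry t).integrable_of_compactSpace _)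
          (g.integrable_of_compactSpace _) hpoint
    _ < ε / 2 + η * (2 * m + ε / 2) :=
        add_lt_add_of_lt_of_le (hsmall g (Finset.mem_insert_of_mem (hG.mem_toFinset.2 hgG)))
          (mul_le_mul_of_nonneg_left (by linarith) hη.le)
    _ = ε := by simp only [η]; field_simp; ring

end UniformConvergence

theorem empirical_risk_minimizers_consistent_general
    {d m : ℕ} (N : (Fin d → ℝ) → ℝ)
    (hN_tri : ∀ x y, N (x + y) ≤ N x + N y)
    (hN_smul : ∀ (c : ℝ) (x), N (c • x) = |c| * N x)
    (hN_def : ∀ x, N x = 0 → x = 0)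
    {Ω : Type} [MeasurableSpace Ω] (P : Measure Ω)
    (S : Measure (PosSphere d N)) [IsFiniteMeasure S]
    (Shat : ℕ → Ω → Measure (PosSphere d N))
    (hShat_fin : ∀ n ω, IsFiniteMeasure (Shat n ω))
    (hconv : ∀ f : PosSphere d N → ℝ, Continuous f →
      TendstoInMeasure P (fun n ω => ∫ a, f a ∂(Shat n ω)) atTop
        (fun _ => ∫ a, f a ∂S))
    (K : Set (Fin m → ℝ)) (hK : IsCompact K)
    (c : K → PosSphere d N → ℝ)
    (hc : Continuous fun q : K × PosSphere d N => c q.1 q.2)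
    (θ : ℕ → Ω → K)
    (hθ_min : ∀ n ω, ∫ a, c (θ n ω) a ∂(Shat n ω) = ⨅ t : K, ∫ a, c t a ∂(Shat n ω)) :
    TendstoInMeasure P (fun n ω => ∫ a, c (θ n ω) a ∂S) atTop
      (fun _ => ⨅ t : K, ∫ a, c t a ∂S) := by
  have := compactSpace_posSphere N hN_tri hN_smul hN_def
  have : CompactSpace K := isCompact_iff_compactSpace.1 hK
  let C : C(K × PosSphere d N, ℝ) := ⟨_, hc⟩
  have hθ_le : ∀ n ω t, ∫ a, c (θ n ω) a ∂(Shat n ω) ≤ ∫ a, c t a ∂(Shat n ω) := fun n ω t => by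
    have := hShat_fin n ω
    rw [hθ_min]
    exact ciInf_le (bddBelow_range_integral C (Shat n ω)) t
  refine tendstoInMeasure_iff_dist.2 fun ε hε => ?_
  refine tendsto_of_tendsto_of_tendsto_of_le_of_le tendsto_const_nhds
    (tendsto_measure_exists_le_dist_integral hShat_fin (fun f => hconv f f.continuous) C
      (div_pos hε three_pos)) (fun _ => zero_le) fun n => measure_mono fun ω => ?_
  simp only [mem_ofPred_eq]
  contrapose!
  intro hclose
  calc dist (∫ a, c (θ n ω) a ∂S) (⨅ t : K, ∫ a, c t a ∂S)
      ≤ 2 * (ε / 3) := dist_iInf_le_of_forall_dist_le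
        (fun t => (dist_comm _ _).trans_le (hclose t).le) (hθ_le n ω)
    _ < ε := by linarith

/-- Theorem 2(ii) of the paper: consistency of empirical risk minimization.  If the random
finite measures `Ŝ_n` converge weakly in probability to the finite measure `S`, `K ⊆ ℝ^m`
is compact and nonempty, `c : K × S^{d-1}_+ → ℝ` is continuous, and `θ̂_n` is any sequence
of random elements of `K` minimizing the empirical risk, then the true risk of `θ̂_n`
converges in probability to the minimal true risk. -/
theorem empirical_risk_minimizers_consistent
    {d m : ℕ} (N : (Fin d → ℝ) → ℝ)
    (hN_tri : ∀ x y, N (x + y) ≤ N x + N y)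
    (hN_smul : ∀ (c : ℝ) (x), N (c • x) = |c| * N x)
    (hN_def : ∀ x, N x = 0 → x = 0)
    {Ω : Type} [MeasurableSpace Ω] (P : Measure Ω) [IsProbabilityMeasure P]
    (S : Measure (PosSphere d N)) [IsFiniteMeasure S]
    (Shat : ℕ → Ω → Measure (PosSphere d N))
    (hShat_fin : ∀ n ω, IsFiniteMeasure (Shat n ω))
    (hShat_meas : ∀ (n : ℕ) (f : PosSphere d N → ℝ), Continuous f →
      Measurable fun ω => ∫ a, f a ∂(Shat n ω))
    (hconv : ∀ f : PosSphere d N → ℝ, Continuous f →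
      TendstoInMeasure P (fun n ω => ∫ a, f a ∂(Shat n ω)) atTop
        (fun _ => ∫ a, f a ∂S))
    (K : Set (Fin m → ℝ)) (hK : IsCompact K) (hKne : K.Nonempty)
    (c : K → PosSphere d N → ℝ)
    (hc : Continuous fun q : K × PosSphere d N => c q.1 q.2)
    (θ : ℕ → Ω → K) (hθ_meas : ∀ n, Measurable (θ n))
    (hθ_min : ∀ n ω, ∫ a, c (θ n ω) a ∂(Shat n ω) = ⨅ t : K, ∫ a, c t a ∂(Shat n ω)) :
    TendstoInMeasure P (fun n ω => ∫ a, c (θ n ω) a ∂S) atTop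
      (fun _ => ⨅ t : K, ∫ a, c t a ∂S) :=
  empirical_risk_minimizers_consistent_general N hN_tri hN_smul hN_def P S Shat hShat_fin hconv K hK
    c hc θ hθ_min
end

section
/- Let (Ω, 𝒜, P) be a probability space, let S be a finite Borel measure on S^{d-1}_+, and let (Ŝ_n)_{n∈ℕ} be random finite Borel measures on S^{d-1}_+ on (Ω, 𝒜, P) such that for every continuous f: S^{d-1}_+ → ℝ the random variables ∫ f(a) Ŝ_n(da) converge in probability to ∫ f(a) S(da). Let K ⊆ ℝ^m be a nonempty compact set and c: K × S^{d-1}_+ → ℝ continuous. Then sup_{θ∈K} |∫ c(θ,a) Ŝ_n(da) − ∫ c(θ,a) S(da)| converges to 0 in probability as n → ∞. -/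
open MeasureTheory Filter Topology

/-!
The positive sphere is compact, so `θ ↦ c(θ, ·)` is a continuous map from the compact `K` into
`C(S^{d-1}_+, ℝ)` with its sup distance, and finitely many `θ_j` are `δ`-dense for it. Integrating,
`|∫ c(θ,·) dŜ_n − ∫ c(θ,·) dS|` differs from its value at the nearest `θ_j` by at most
`δ (Ŝ_n(S^{d-1}_+) + S(S^{d-1}_+))`, and the total mass of `Ŝ_n` converges in probability (test
against `1`). Hence the supremum exceeds `ε` only if the mass or one of the finitely many
differences at the `θ_j` is off, and a union bound concludes.
-/

/-- A copy of a vector space forgetting its topology, so that a norm can be put on it by hand. -/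
def PlainCopy (E : Type*) : Type _ := E

section NormAxioms

variable {E : Type*} [AddCommGroup E] [Module ℝ E]

instance : AddCommGroup (PlainCopy E) := ‹AddCommGroup E›

instance : Module ℝ (PlainCopy E) := ‹Module ℝ E›

def PlainCopy.equiv : PlainCopy E ≃ₗ[ℝ] E := LinearEquiv.refl ℝ E

/-- Normed by `N`, `E` is a finite-dimensional normed space, hence proper; and the identity to
`E` is a homeomorphism because all Hausdorff vector topologies on `E` agree. -/
theorem isCompact_setOf_eq_one_of_norm_axioms [TopologicalSpace E] [IsTopologicalAddGroup E]
    [ContinuousSMul ℝ E] [T2Space E] [FiniteDimensional ℝ E] (N : E → ℝ)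
    (h_add : ∀ x y, N (x + y) ≤ N x + N y) (h_smul : ∀ (c : ℝ) x, N (c • x) = |c| * N x)
    (h_eq_zero : ∀ x, N x = 0 → x = 0) : IsCompact {x | N x = 1} := by
  have h_zero : N 0 = 0 := by simpa using h_smul 0 0
  have h_nonneg (x : E) : 0 ≤ N x := by
    have := h_add x ((-1 : ℝ) • x)
    rw [h_smul, neg_one_smul, add_neg_cancel, h_zero, abs_neg, abs_one, one_mul] at this
    linarith
  let _ : Norm (PlainCopy E) := ⟨N⟩
  have core : NormedSpace.Core ℝ (PlainCopy E) :=
    { norm_nonneg := h_nonneg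
      norm_smul := h_smul
      norm_triangle := h_add
      norm_eq_zero_iff x := ⟨h_eq_zero x, fun h => h ▸ h_zero⟩ }
  let _ := NormedAddCommGroup.ofCore core
  let _ := NormedSpace.ofCore core
  have : FiniteDimensional ℝ (PlainCopy E) := ‹FiniteDimensional ℝ E›
  have := FiniteDimensional.proper_real (PlainCopy E)
  let e : PlainCopy E ≃L[ℝ] E := PlainCopy.equiv.toContinuousLinearEquiv
  have h_image : {x : E | N x = 1} = e '' Metric.sphere 0 1 := by
    ext x
    exact ⟨fun hx => ⟨x, mem_sphere_zero_iff_norm.2 hx, rfl⟩,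
      by rintro ⟨y, hy, rfl⟩; exact mem_sphere_zero_iff_norm.1 hy⟩
  exact h_image ▸ (isCompact_sphere 0 1).image e.continuous

end NormAxioms

theorem Continuous.exists_finset_forall_exists_dist_lt {K E : Type*} [TopologicalSpace K]
    [CompactSpace K] [PseudoMetricSpace E] {F : K → E} (hF : Continuous F) {δ : ℝ}
    (hδ : 0 < δ) : ∃ T : Finset K, ∀ s, ∃ t ∈ T, dist (F s) (F t) < δ := by
  obtain ⟨T, hT⟩ := isCompact_univ.elim_finite_subcover (fun t => F ⁻¹' Metric.ball (F t) δ)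
    (fun t => Metric.isOpen_ball.preimage hF) fun s _ =>
      Set.mem_iUnion.2 ⟨s, Metric.mem_ball_self hδ⟩
  exact ⟨T, fun s => by simpa using hT (Set.mem_univ s)⟩

theorem abs_integral_sub_integral_le_dist_mul {X : Type*} [TopologicalSpace X] [CompactSpace X]
    [MeasurableSpace X] [OpensMeasurableSpace X] (μ : Measure X) [IsFiniteMeasure μ]
    (f g : C(X, ℝ)) : |∫ a, f a ∂μ - ∫ a, g a ∂μ| ≤ dist f g * μ.real Set.univ := by
  have integrable (h : C(X, ℝ)) : Integrable h μ :=
    h.continuous.integrable_of_hasCompactSupport (.of_compactSpace _)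
  rw [← integral_sub (integrable f) (integrable g), ← Real.norm_eq_abs]
  refine norm_integral_le_of_norm_le_const <| .of_forall fun a => ?_
  rw [Real.norm_eq_abs, ← Real.dist_eq]
  exact f.dist_apply_le_dist a

namespace MeasureTheory

variable {ι Ω E : Type*} [MeasurableSpace Ω] {P : Measure Ω} {l : Filter ι}
  [SeminormedAddCommGroup E] {f : ι → Ω → E}

theorem TendstoInMeasure.add_const {g : Ω → E} (h : TendstoInMeasure P f l g) (c : E) :
    TendstoInMeasure P (fun i ω => f i ω + c) l fun ω => g ω + c :=
  fun ε hε => by simpa only [edist_add_right] using h ε hε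

theorem tendstoInMeasure_const_iff_sub {c : E} :
    TendstoInMeasure P f l (fun _ => c) ↔ TendstoInMeasure P (fun i ω => f i ω - c) l 0 := by
  simp only [TendstoInMeasure, Pi.zero_apply, edist_eq_enorm_sub, sub_zero]

theorem tendstoInMeasure_iSup_abs_of_lipschitz {K E' : Type*} [TopologicalSpace K]
    [CompactSpace K] [PseudoMetricSpace E'] {F : K → E'} (hF : Continuous F)
    {Y : ι → Ω → K → ℝ} {L : ι → Ω → ℝ} {ℓ : ℝ}
    (hY : ∀ t, TendstoInMeasure P (fun i ω => Y i ω t) l 0)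
    (hL : TendstoInMeasure P L l fun _ => ℓ)
    (hYL : ∀ i ω s t, |Y i ω s - Y i ω t| ≤ L i ω * dist (F s) (F t)) :
    TendstoInMeasure P (fun i ω => ⨆ t, |Y i ω t|) l 0 := by
  rw [tendstoInMeasure_iff_dist] at hL ⊢
  intro ε hε
  obtain ⟨T, hT⟩ := hF.exists_finset_forall_exists_dist_lt
    (δ := ε / (4 * (|ℓ| + 1))) (by positivity)
  have hsup {i ω} (hLω : dist (L i ω) ℓ < 1) (hYω : ∀ t ∈ T, dist (Y i ω t) 0 < ε / 2) :
      ⨆ t, |Y i ω t| ≤ 3 * ε / 4 := by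
    refine Real.iSup_le (fun s => ?_) (by positivity)
    obtain ⟨t, htT, hst⟩ := hT s
    have hLbound : L i ω ≤ |ℓ| + 1 := by
      rw [Real.dist_eq] at hLω
      linarith [le_abs_self (L i ω - ℓ), le_abs_self ℓ]
    have hlip : L i ω * dist (F s) (F t) ≤ ε / 4 := calc
      L i ω * dist (F s) (F t) ≤ (|ℓ| + 1) * dist (F s) (F t) :=
        mul_le_mul_of_nonneg_right hLbound dist_nonneg
      _ ≤ (|ℓ| + 1) * (ε / (4 * (|ℓ| + 1))) := by gcongr
      _ = ε / 4 := by field_simp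
    have hYt := hYω t htT
    rw [Real.dist_0_eq_abs] at hYt
    linarith [abs_sub_abs_le_abs_sub (Y i ω s) (Y i ω t), hYL i ω s t]
  have hbad (i : ι) : {ω | ε ≤ dist (⨆ t, |Y i ω t|) 0} ⊆
      {ω | 1 ≤ dist (L i ω) ℓ} ∪ ⋃ t ∈ T, {ω | ε / 2 ≤ dist (Y i ω t) 0} := by
    intro ω hω
    by_contra h
    simp only [Set.mem_union, Set.mem_iUnion, Set.mem_ofPred_eq, not_or, not_exists,
      not_le] at h hω
    have := hsup h.1 h.2
    rw [Real.dist_0_eq_abs, abs_of_nonneg (Real.iSup_nonneg fun t => abs_nonneg _)] at hω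
    linarith
  have hlim : Tendsto (fun i => P {ω | 1 ≤ dist (L i ω) ℓ} +
      ∑ t ∈ T, P {ω | ε / 2 ≤ dist (Y i ω t) 0}) l (𝓝 0) := by
    simpa using (hL 1 one_pos).add (tendsto_finsetSum T fun t _ =>
      tendstoInMeasure_iff_dist.1 (hY t) (ε / 2) (half_pos hε))
  refine tendsto_of_tendsto_of_tendsto_of_le_of_le tendsto_const_nhds hlim (fun _ => zero_le)
    fun i => ?_
  calc P _ ≤ P _ := measure_mono (hbad i)
    _ ≤ _ := (measure_union_le _ _).trans (add_le_add le_rfl (measure_biUnion_finset_le _ _))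

end MeasureTheory

theorem sup_integral_dist_tendstoInMeasure_zero_general
    {d m : ℕ} (N : (Fin d → ℝ) → ℝ)
    (hN_tri : ∀ x y, N (x + y) ≤ N x + N y)
    (hN_smul : ∀ (c : ℝ) (x), N (c • x) = |c| * N x)
    (hN_def : ∀ x, N x = 0 → x = 0)
    {Ω : Type} [MeasurableSpace Ω] (P : Measure Ω)
    (S : Measure (PosSphere d N)) [IsFiniteMeasure S]
    (Shat : ℕ → Ω → Measure (PosSphere d N))
    (hShat_fin : ∀ n ω, IsFiniteMeasure (Shat n ω))
    (hconv : ∀ f : PosSphere d N → ℝ, Continuous f →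
      TendstoInMeasure P (fun n ω => ∫ a, f a ∂(Shat n ω)) atTop
        (fun _ => ∫ a, f a ∂S))
    (K : Set (Fin m → ℝ)) (hK : IsCompact K)
    (c : K → PosSphere d N → ℝ)
    (hc : Continuous fun q : K × PosSphere d N => c q.1 q.2) :
    TendstoInMeasure P
      (fun n ω => ⨆ t : K, |(∫ a, c t a ∂(Shat n ω)) - ∫ a, c t a ∂S|) atTop
      (fun _ => 0) := by
  have : CompactSpace (PosSphere d N) := isCompact_iff_compactSpace.mp <|
    (isCompact_setOf_eq_one_of_norm_axioms N hN_tri hN_smul hN_def).inter_left <|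
      isClosed_Ici (a := 0)
  have : CompactSpace K := isCompact_iff_compactSpace.mp hK
  let F : C(K, C(PosSphere d N, ℝ)) := ContinuousMap.curry ⟨_, hc⟩
  have hmass : TendstoInMeasure P (fun n ω => (Shat n ω).real Set.univ) atTop
      fun _ => S.real Set.univ := by
    simpa using hconv (fun _ => 1) continuous_const
  refine tendstoInMeasure_iSup_abs_of_lipschitz F.continuous (fun t => ?_)
    (hmass.add_const (S.real Set.univ)) fun n ω s t => ?_
  · exact tendstoInMeasure_const_iff_sub.1 (hconv _ (F t).continuous)
  · have := hShat_fin n ω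
    calc _ ≤ |(∫ a, c s a ∂(Shat n ω)) - ∫ a, c t a ∂(Shat n ω)|
          + |(∫ a, c s a ∂S) - ∫ a, c t a ∂S| := by
          rw [sub_sub_sub_comm]; exact abs_sub _ _
      _ ≤ _ := by
        rw [add_mul, mul_comm, mul_comm (S.real _)]
        exact add_le_add (abs_integral_sub_integral_le_dist_mul _ (F s) (F t))
          (abs_integral_sub_integral_le_dist_mul _ (F s) (F t))

/-- Uniform convergence step in the proof of Theorem 2 of the paper: if the random finite
measures `Ŝ_n` converge weakly in probability to the finite measure `S`, `K ⊆ ℝ^m` is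
compact and nonempty and `c : K × S^{d-1}_+ → ℝ` is continuous, then
`sup_{θ ∈ K} |∫ c(θ,·) dŜ_n − ∫ c(θ,·) dS| → 0` in probability. -/
theorem sup_integral_dist_tendstoInMeasure_zero
    {d m : ℕ} (N : (Fin d → ℝ) → ℝ)
    (hN_tri : ∀ x y, N (x + y) ≤ N x + N y)
    (hN_smul : ∀ (c : ℝ) (x), N (c • x) = |c| * N x)
    (hN_def : ∀ x, N x = 0 → x = 0)
    {Ω : Type} [MeasurableSpace Ω] (P : Measure Ω) [IsProbabilityMeasure P]
    (S : Measure (PosSphere d N)) [IsFiniteMeasure S]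
    (Shat : ℕ → Ω → Measure (PosSphere d N))
    (hShat_fin : ∀ n ω, IsFiniteMeasure (Shat n ω))
    (hShat_meas : ∀ (n : ℕ) (f : PosSphere d N → ℝ), Continuous f →
      Measurable fun ω => ∫ a, f a ∂(Shat n ω))
    (hconv : ∀ f : PosSphere d N → ℝ, Continuous f →
      TendstoInMeasure P (fun n ω => ∫ a, f a ∂(Shat n ω)) atTop
        (fun _ => ∫ a, f a ∂S))
    (K : Set (Fin m → ℝ)) (hK : IsCompact K) (hKne : K.Nonempty)
    (c : K → PosSphere d N → ℝ)
    (hc : Continuous fun q : K × PosSphere d N => c q.1 q.2) :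
    TendstoInMeasure P
      (fun n ω => ⨆ t : K, |(∫ a, c t a ∂(Shat n ω)) - ∫ a, c t a ∂S|) atTop
      (fun _ => 0) :=
  sup_integral_dist_tendstoInMeasure_zero_general N hN_tri hN_smul hN_def P S Shat hShat_fin hconv K
    hK c hc
end

section
/- Fix a norm ‖·‖ on ℝ^d and on ℝ^p. Let S be a finite Borel measure on S^{d-1}_+ with σ_j := ∫ a_j S(da) > 0 for all j = 1,…,d, let μ be a probability measure on [0,∞)^d satisfying μ({x : x ≤ z componentwise}) = exp(−∫_{S^{d-1}_+} max_{i=1,…,d} (a_i/z_i) S(da)) for all z ∈ (0,∞)^d, and let H ∈ [0,∞)^{p×d}. Define the measure S̃ on the Borel sets of S^{p-1}_+ by S̃(A) := ∫_{{a ∈ S^{d-1}_+ : ‖H⋄a‖ > 0}} 1_A( (H⋄a)/‖H⋄a‖ ) · ‖H⋄a‖ S(da). Then S̃ is a finite Borel measure on S^{p-1}_+, and the pushforward measure ν of μ under the map x ↦ H ⋄ x satisfies ν({y : y ≤ z componentwise}) = exp(−∫_{S^{p-1}_+} max_{i=1,…,p} (a_i/z_i) S̃(da)) for all z ∈ (0,∞)^p.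 -/
/-!
For `x ≥ 0` and `z > 0` the event `H ⋄ x ≤ z` is `∀ l, x l * c l ≤ 1` with
`c l = max_i H i l / z i`, so the distribution function of the pushforward at `z` is that of `μ`
at the threshold `1 / c`, whose coordinates are `+∞` where `c` vanishes; such thresholds are
reached by increasing finite ones, with dominated convergence in the exponent. On the spectral
side, `y ↦ max_i y i / z i` is positively homogeneous, so integrating it against `S̃` undoes the
normalisation and the density: the exponent becomes `∫ max_i (H ⋄ a) i / z i dS`, which equals
`∫ max_l a l * c l dS` on the nonnegative orthant.
-/

open MeasureTheory

/-- The transformed spectral measure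
`S̃(A) := ∫_{‖H⋄a‖ > 0} 1_A((H⋄a)/‖H⋄a‖) ‖H⋄a‖ S(da)`,
formalized as the pushforward under the normalization map of the measure `S`
restricted to `{‖H⋄a‖ > 0}` and weighted by the density `‖H⋄a‖`. -/
noncomputable def transformedSpectralMeasure {d p : ℕ}
    (N' : (Fin p → ℝ) → ℝ) (S : Measure (Fin d → ℝ)) (H : Fin p → Fin d → ℝ) :
    Measure (Fin p → ℝ) :=
  Measure.map (fun a => (N' (maxVec H a))⁻¹ • maxVec H a)
    ((S.restrict {a | 0 < N' (maxVec H a)}).withDensity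
      fun a => ENNReal.ofReal (N' (maxVec H a)))

open Filter Topology

section FiniteSup

variable {ι κ X : Type*} [Finite ι] [Nonempty ι]

lemma Continuous.ciSup_of_finite {L : Type*} [ConditionallyCompleteLinearOrder L]
    [TopologicalSpace L] [OrderTopology L] [TopologicalSpace X] {f : ι → X → L}
    (hf : ∀ i, Continuous (f i)) : Continuous fun x => ⨆ i, f i x := by
  have := Fintype.ofFinite ι
  simp_rw [← Finset.sup'_univ_eq_ciSup]
  exact Continuous.finset_sup'_apply Finset.univ_nonempty fun i _ => hf i

lemma ciSup_comm_of_finite {L : Type*} [ConditionallyCompleteLattice L] [Finite κ] [Nonempty κ]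
    (f : ι → κ → L) : ⨆ i, ⨆ j, f i j = ⨆ j, ⨆ i, f i j := by
  refine le_antisymm (ciSup_le fun i => ciSup_le fun j => ?_)
    (ciSup_le fun j => ciSup_le fun i => ?_)
  · exact (le_ciSup (Finite.bddAbove_range (f · j)) i).trans
      (le_ciSup (Finite.bddAbove_range fun j => ⨆ i, f i j) j)
  · exact (le_ciSup (Finite.bddAbove_range (f i)) j).trans
      (le_ciSup (Finite.bddAbove_range fun i => ⨆ j, f i j) i)

lemma abs_ciSup_le_sum [Fintype ι] (f : ι → ℝ) : |⨆ i, f i| ≤ ∑ i, |f i| := by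
  obtain ⟨i₀⟩ := ‹Nonempty ι›
  have hle : ∀ i, |f i| ≤ ∑ j, |f j| := fun i =>
    Finset.single_le_sum (fun j _ => abs_nonneg (f j)) (Finset.mem_univ i)
  rw [abs_le]
  exact ⟨(neg_le_neg (hle i₀)).trans
      ((neg_abs_le _).trans (le_ciSup (Finite.bddAbove_range f) i₀)),
    ciSup_le fun i => (le_abs_self _).trans (hle i)⟩

end FiniteSup

lemma Seminorm.le_sum_abs_mul_single {ι : Type*} [Fintype ι] [DecidableEq ι]
    (q : Seminorm ℝ (ι → ℝ)) (y : ι → ℝ) : q y ≤ ∑ i, |y i| * q (Pi.single i 1) :=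
  calc q y = q (∑ i, y i • Pi.single i 1) := by
        congr 1; ext j; simp [Pi.single_apply]
    _ ≤ ∑ i, q (y i • Pi.single i (1 : ℝ)) :=
        Finset.le_sum_of_subadditive q (map_zero q).le (map_add_le_add q) _ _
    _ = ∑ i, |y i| * q (Pi.single i 1) := by simp only [map_smul_eq_mul, Real.norm_eq_abs]

lemma Seminorm.continuous_of_finiteDimensional_s6 {E : Type*} [NormedAddCommGroup E]
    [NormedSpace ℝ E] [FiniteDimensional ℝ E] (q : Seminorm ℝ E) : Continuous q :=
  q.convexOn.locallyLipschitz.continuous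

section MaxLinear

variable {ι : Type*}

lemma iSup_smul_div {y z : ι → ℝ} {c : ℝ} (hc : 0 ≤ c) :
    ⨆ i, (c • y) i / z i = c * ⨆ i, y i / z i := by
  simp only [Pi.smul_apply, smul_eq_mul, mul_div_assoc, Real.mul_iSup_of_nonneg hc]

lemma iSup_div_le_one_iff [Finite ι] [Nonempty ι] {y z : ι → ℝ} (hz : ∀ i, 0 < z i) :
    ⨆ i, y i / z i ≤ 1 ↔ ∀ i, y i ≤ z i := by
  rw [ciSup_le_iff (Finite.bddAbove_range _)]
  exact forall_congr' fun i => div_le_one (hz i)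

variable {p d : ℕ} (H : Fin p → Fin d → ℝ)

lemma continuous_maxVec [NeZero d] : Continuous (maxVec H) :=
  continuous_pi fun _ => Continuous.ciSup_of_finite fun l => (continuous_apply l).const_mul _

lemma abs_maxVec_le [NeZero d] (a : Fin d → ℝ) (i : Fin p) :
    |maxVec H a i| ≤ ∑ l, |H i l| * |a l| :=
  (abs_ciSup_le_sum fun l => H i l * a l).trans_eq (by simp only [abs_mul])

lemma maxVec_nonneg {H : Fin p → Fin d → ℝ} (hH : ∀ i l, 0 ≤ H i l) {a : Fin d → ℝ}
    (ha : 0 ≤ a) : 0 ≤ maxVec H a := fun i =>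
  Real.iSup_nonneg fun l => mul_nonneg (hH i l) (ha l)

lemma iSup_maxVec_div [NeZero p] [NeZero d] {x : Fin d → ℝ} {z : Fin p → ℝ} (hx : 0 ≤ x)
    (hz : 0 ≤ z) : ⨆ i, maxVec H x i / z i = ⨆ l, x l * ⨆ i, H i l / z i := by
  have hterm : ∀ i, maxVec H x i / z i = ⨆ l, x l * (H i l / z i) := fun i => by
    rw [maxVec, div_eq_mul_inv, Real.iSup_mul_of_nonneg (inv_nonneg.2 (hz i))]
    congr 1 with l
    ring
  simp_rw [hterm, Real.mul_iSup_of_nonneg (hx _)]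
  exact ciSup_comm_of_finite _

lemma maxVec_le_iff [NeZero p] [NeZero d] {x : Fin d → ℝ} {z : Fin p → ℝ} (hx : 0 ≤ x)
    (hz : ∀ i, 0 < z i) :
    (∀ i, maxVec H x i ≤ z i) ↔ ∀ l, x l * ⨆ i, H i l / z i ≤ 1 := by
  rw [← iSup_div_le_one_iff hz, iSup_maxVec_div H hx fun i => (hz i).le,
    ciSup_le_iff (Finite.bddAbove_range _)]

end MaxLinear

section TransformedSpectralMeasure

variable {p d : ℕ} [NeZero d] (q : Seminorm ℝ (Fin p → ℝ)) {S : Measure (Fin d → ℝ)}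
  (H : Fin p → Fin d → ℝ)

lemma continuous_seminorm_maxVec : Continuous fun a => q (maxVec H a) :=
  q.continuous_of_finiteDimensional_s6.comp (continuous_maxVec H)

lemma measurableSet_seminorm_maxVec_pos : MeasurableSet {a | 0 < q (maxVec H a)} :=
  measurableSet_lt measurable_const (continuous_seminorm_maxVec q H).measurable

lemma measurable_normalize_maxVec : Measurable fun a => (q (maxVec H a))⁻¹ • maxVec H a :=
  (continuous_seminorm_maxVec q H).measurable.inv.smul (continuous_maxVec H).measurable

lemma integrable_seminorm_maxVec (hS : ∀ l, Integrable (fun a => a l) S) :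
    Integrable (fun a => q (maxVec H a)) S := by
  classical
  have hbound : Integrable
      (fun a => ∑ i, (∑ l, |H i l| * |a l|) * q (Pi.single i 1)) S :=
    integrable_finsetSum _ fun i _ => (integrable_finsetSum _ fun l _ =>
      ((hS l).abs.const_mul _)).mul_const _
  refine hbound.mono' (continuous_seminorm_maxVec q H).aestronglyMeasurable
    (Eventually.of_forall fun a => ?_)
  rw [Real.norm_of_nonneg (apply_nonneg q _)]
  refine (q.le_sum_abs_mul_single _).trans (Finset.sum_le_sum fun i _ => ?_)
  exact mul_le_mul_of_nonneg_right (abs_maxVec_le H a i) (apply_nonneg q _)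

lemma isFiniteMeasure_transformedSpectralMeasure (hS : ∀ l, Integrable (fun a => a l) S) :
    IsFiniteMeasure (transformedSpectralMeasure q S H) := by
  have := isFiniteMeasure_withDensity_ofReal
    ((integrable_seminorm_maxVec q H hS).restrict (s := {a | 0 < q (maxVec H a)})).2
  exact Measure.isFiniteMeasure_map _ _

lemma transformedSpectralMeasure_compl_sphere (hH : ∀ i l, 0 ≤ H i l)
    (hS : ∀ᵐ a ∂S, 0 ≤ a) :
    transformedSpectralMeasure q S H {y | ¬ ((∀ i, 0 ≤ y i) ∧ q y = 1)} = 0 := by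
  have hsphere : MeasurableSet {y : Fin p → ℝ | (∀ i, 0 ≤ y i) ∧ q y = 1} :=
    (isClosed_Ici.inter
      (isClosed_eq q.continuous_of_finiteDimensional_s6 continuous_const)).measurableSet
  rw [← ae_iff, transformedSpectralMeasure,
    ae_map_iff (measurable_normalize_maxVec q H).aemeasurable hsphere]
  refine withDensity_absolutelyContinuous _ _ ?_
  filter_upwards [ae_restrict_mem (measurableSet_seminorm_maxVec_pos q H), ae_restrict_of_ae hS]
    with a (hpos : 0 < q _) ha
  refine ⟨fun i => mul_nonneg (inv_nonneg.2 hpos.le) (maxVec_nonneg hH ha i), ?_⟩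
  rw [map_smul_eq_mul, Real.norm_of_nonneg (inv_nonneg.2 hpos.le), inv_mul_cancel₀ hpos.ne']

lemma integral_transformedSpectralMeasure (hq : ∀ y, q y = 0 → y = 0)
    {f : (Fin p → ℝ) → ℝ} (hf : Measurable f)
    (hhom : ∀ c : ℝ, 0 ≤ c → ∀ y, f (c • y) = c * f y) :
    ∫ y, f y ∂transformedSpectralMeasure q S H = ∫ a, f (maxVec H a) ∂S := by
  rw [transformedSpectralMeasure, integral_map (measurable_normalize_maxVec q H).aemeasurable
      hf.aestronglyMeasurable,
    integral_withDensity_eq_integral_toReal_smul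
      (continuous_seminorm_maxVec q H).measurable.ennreal_ofReal
      (Eventually.of_forall fun _ => ENNReal.ofReal_lt_top)]
  refine (setIntegral_congr_fun (measurableSet_seminorm_maxVec_pos q H)
      fun a (hpos : 0 < q _) => ?_).trans
    (setIntegral_eq_integral_of_forall_compl_eq_zero fun a (hzero : ¬ 0 < q _) => ?_)
  · rw [hhom _ (inv_nonneg.2 hpos.le), ENNReal.toReal_ofReal hpos.le, smul_eq_mul,
      mul_inv_cancel_left₀ hpos.ne']
  · have : maxVec H a = 0 := hq _ (le_antisymm (not_lt.1 hzero) (apply_nonneg q _))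
    rw [this, ← zero_smul ℝ (0 : Fin p → ℝ), hhom 0 le_rfl, zero_mul]

end TransformedSpectralMeasure

lemma le_inv_max_iff {x w ε : ℝ} (hw : 0 ≤ w) (hε : 0 < ε) :
    x ≤ (max w ε)⁻¹ ↔ x * w ≤ 1 ∧ x ≤ ε⁻¹ := by
  have hmax : 0 < max w ε := lt_max_of_lt_right hε
  rw [inv_eq_one_div, le_div_iff₀ hmax, inv_eq_one_div, le_div_iff₀ hε]
  rcases le_total 0 x with hx | hx
  · rw [mul_max_of_nonneg _ _ hx, max_le_iff]
  · have h₁ : x * w ≤ 0 := mul_nonpos_of_nonpos_of_nonneg hx hw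
    have h₂ : x * ε ≤ 0 := mul_nonpos_of_nonpos_of_nonneg hx hε.le
    have h₃ : x * max w ε ≤ 0 := mul_nonpos_of_nonpos_of_nonneg hx hmax.le
    exact ⟨fun _ => ⟨by linarith, by linarith⟩, fun _ => by linarith⟩

section MaxStable

variable {ι : Type*} [Fintype ι] [Nonempty ι] {S : Measure (ι → ℝ)}

lemma tendsto_integral_iSup_mul (hS : ∀ l, Integrable (fun a => a l) S) {w : ℕ → ι → ℝ}
    {v C : ι → ℝ} (hwv : ∀ l, Tendsto (fun n => w n l) atTop (𝓝 (v l)))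
    (hwC : ∀ n l, |w n l| ≤ C l) :
    Tendsto (fun n => ∫ a, ⨆ l, a l * w n l ∂S) atTop
      (𝓝 (∫ a, ⨆ l, a l * v l ∂S)) := by
  refine tendsto_integral_of_dominated_convergence (fun a => ∑ l, |a l| * C l)
    (fun n => (Continuous.ciSup_of_finite fun l =>
      (continuous_apply l).mul_const _).aestronglyMeasurable)
    (integrable_finsetSum _ fun l _ => (hS l).abs.mul_const _)
    (fun n => Eventually.of_forall fun a => ?_) (Eventually.of_forall fun a => ?_)
  · refine (abs_ciSup_le_sum _).trans (Finset.sum_le_sum fun l _ => ?_)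
    rw [abs_mul]
    exact mul_le_mul_of_nonneg_left (hwC n l) (abs_nonneg _)
  · have hsup : Continuous fun u : ι → ℝ => ⨆ l, a l * u l :=
      Continuous.ciSup_of_finite fun l => continuous_const.mul (continuous_apply l)
    exact (hsup.tendsto v).comp (tendsto_pi_nhds.2 hwv)

lemma measure_mul_le_one_eq_of_cdf {μ : Measure (ι → ℝ)}
    (hS : ∀ l, Integrable (fun a => a l) S)
    (hcdf : ∀ z : ι → ℝ, (∀ i, 0 < z i) →
      μ {x | ∀ i, x i ≤ z i} = ENNReal.ofReal (Real.exp (-∫ a, ⨆ i, a i / z i ∂S)))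
    {w : ι → ℝ} (hw : ∀ l, 0 ≤ w l) :
    μ {x | ∀ l, x l * w l ≤ 1} =
      ENNReal.ofReal (Real.exp (-∫ a, ⨆ l, a l * w l ∂S)) := by
  set ε : ℕ → ℝ := fun n => 1 / ((n : ℝ) + 1)
  have hε : ∀ n, 0 < ε n := fun n => Nat.one_div_pos_of_nat
  set A : ℕ → Set (ι → ℝ) := fun n =>
    {x | ∀ l, x l * w l ≤ 1} ∩ {x | ∀ l, x l ≤ n + 1}
  have hA : ∀ n, A n = {x | ∀ l, x l ≤ (max (w l) (ε n))⁻¹} := fun n => by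
    ext x
    rw [Set.mem_ofPred, forall_congr' fun l => le_inv_max_iff (hw l) (hε n), forall_and]
    simp only [A, ε, one_div, inv_inv, Set.mem_inter_iff, Set.mem_ofPred]
  have hA_mono : Monotone A := monotone_nat_of_le_succ fun n =>
    Set.inter_subset_inter_right _ fun x hx l => by push_cast; linarith [hx l]
  have hA_union : ⋃ n, A n = {x | ∀ l, x l * w l ≤ 1} := by
    refine (Set.inter_iUnion _ _).symm.trans (Set.inter_eq_left.2 fun x _ => ?_)
    obtain ⟨n, hn⟩ := (eventually_all.2 fun l =>
      tendsto_natCast_atTop_atTop.eventually_ge_atTop (x l)).exists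
    exact Set.mem_iUnion.2 ⟨n, fun l => (hn l).trans (by linarith)⟩
  have hw_lim : ∀ l, Tendsto (fun n => max (w l) (ε n)) atTop (𝓝 (w l)) := fun l => by
    have := (tendsto_const_nhds (x := w l)).max
      (tendsto_one_div_add_atTop_nhds_zero_nat (𝕜 := ℝ))
    rwa [max_eq_left (hw l)] at this
  have hw_bound : ∀ n l, |max (w l) (ε n)| ≤ w l + 1 := fun n l => by
    have : ε n ≤ 1 := (div_le_one (by positivity)).2 (by linarith [n.cast_nonneg (α := ℝ)])
    rw [abs_of_pos (lt_max_of_lt_right (hε n))]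
    exact max_le (by linarith) (by linarith [hw l])
  have hlim_cdf : Tendsto (fun n => μ (A n)) atTop
      (𝓝 (ENNReal.ofReal (Real.exp (-∫ a, ⨆ l, a l * w l ∂S)))) := by
    simp_rw [hA, hcdf _ fun l => inv_pos.2 (lt_max_of_lt_right (hε _)), div_inv_eq_mul]
    exact (ENNReal.continuous_ofReal.tendsto _).comp ((Real.continuous_exp.tendsto _).comp
      (tendsto_integral_iSup_mul hS hw_lim hw_bound).neg)
  exact tendsto_nhds_unique (hA_union ▸ tendsto_measure_iUnion_atTop hA_mono) hlim_cdf

end MaxStable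

theorem maxlinear_pushforward_maxstable_general
    {d p : ℕ} (hd : 0 < d) (hp : 0 < p)
    (N : (Fin d → ℝ) → ℝ)
    (N' : (Fin p → ℝ) → ℝ)
    (hN'_tri : ∀ x y, N' (x + y) ≤ N' x + N' y)
    (hN'_smul : ∀ (c : ℝ) (x), N' (c • x) = |c| * N' x)
    (hN'_def : ∀ x, N' x = 0 → x = 0)
    (S : Measure (Fin d → ℝ))
    (hS_sphere : S {a | ¬ ((∀ i, 0 ≤ a i) ∧ N a = 1)} = 0)
    (hS_pos : ∀ j, 0 < ∫ a, a j ∂S)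
    (μ : Measure (Fin d → ℝ))
    (hμ_orthant : μ {x | ¬ ∀ i, 0 ≤ x i} = 0)
    (hμ_cdf : ∀ z : Fin d → ℝ, (∀ i, 0 < z i) →
      μ {x | ∀ i, x i ≤ z i} =
        ENNReal.ofReal (Real.exp (-∫ a, ⨆ i, a i / z i ∂S)))
    (H : Fin p → Fin d → ℝ) (hH : ∀ i j, 0 ≤ H i j) :
    IsFiniteMeasure (transformedSpectralMeasure N' S H) ∧
    (transformedSpectralMeasure N' S H) {y | ¬ ((∀ i, 0 ≤ y i) ∧ N' y = 1)} = 0 ∧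
    ∀ z : Fin p → ℝ, (∀ i, 0 < z i) →
      (μ.map (maxVec H)) {y | ∀ i, y i ≤ z i} =
        ENNReal.ofReal
          (Real.exp (-∫ a, ⨆ i, a i / z i ∂(transformedSpectralMeasure N' S H))) := by
  have : NeZero d := ⟨hd.ne'⟩
  have : NeZero p := ⟨hp.ne'⟩
  let q : Seminorm ℝ (Fin p → ℝ) :=
    Seminorm.of N' hN'_tri fun c y => by rw [hN'_smul, Real.norm_eq_abs]
  have hS_int : ∀ l, Integrable (fun a => a l) S := fun l =>
    Integrable.of_integral_ne_zero (hS_pos l).ne'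
  have hS_nonneg : ∀ᵐ a ∂S, 0 ≤ a := (ae_iff.2 hS_sphere).mono fun _ ha => ha.1
  refine ⟨isFiniteMeasure_transformedSpectralMeasure q H hS_int,
    transformedSpectralMeasure_compl_sphere q H hH hS_nonneg, fun z hz => ?_⟩
  have hIic : MeasurableSet {y : Fin p → ℝ | ∀ i, y i ≤ z i} := measurableSet_Iic
  have hf : Measurable fun y : Fin p → ℝ => ⨆ i, y i / z i :=
    (Continuous.ciSup_of_finite fun i => (continuous_apply i).div_const _).measurable
  calc μ.map (maxVec H) {y | ∀ i, y i ≤ z i}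
      = μ {x | ∀ l, x l * ⨆ i, H i l / z i ≤ 1} := by
        rw [Measure.map_apply (continuous_maxVec H).measurable hIic]
        exact measure_congr ((ae_iff.2 hμ_orthant).mono fun x hx =>
          propext (maxVec_le_iff H hx hz))
    _ = ENNReal.ofReal (Real.exp (-∫ a, ⨆ l, a l * ⨆ i, H i l / z i ∂S)) :=
        measure_mul_le_one_eq_of_cdf hS_int hμ_cdf fun l =>
          Real.iSup_nonneg fun i => div_nonneg (hH i l) (hz i).le
    _ = _ := by
        congr 3
        refine (integral_congr_ae (hS_nonneg.mono fun a ha => ?_)).trans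
          (integral_transformedSpectralMeasure q H hN'_def hf fun _ hc _ => iSup_smul_div hc).symm
        exact (iSup_maxVec_div H ha fun i => (hz i).le).symm

/-- Lemma S1 of the paper: if `μ` is max-stable with non-degenerate 1-Fréchet margins and
spectral measure `S` (on the positive unit sphere of a norm `N` on `ℝ^d`), and
`H ∈ [0,∞)^{p×d}`, then the transformed measure `S̃` is a finite Borel measure concentrated
on the positive unit sphere of the norm `N'` on `ℝ^p`, and the pushforward of `μ` under
`x ↦ H ⋄ x` is max-stable with 1-Fréchet margins and spectral measure `S̃`. -/
theorem maxlinear_pushforward_maxstable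
    {d p : ℕ} (hd : 0 < d) (hp : 0 < p)
    (N : (Fin d → ℝ) → ℝ)
    (hN_tri : ∀ x y, N (x + y) ≤ N x + N y)
    (hN_smul : ∀ (c : ℝ) (x), N (c • x) = |c| * N x)
    (hN_def : ∀ x, N x = 0 → x = 0)
    (N' : (Fin p → ℝ) → ℝ)
    (hN'_tri : ∀ x y, N' (x + y) ≤ N' x + N' y)
    (hN'_smul : ∀ (c : ℝ) (x), N' (c • x) = |c| * N' x)
    (hN'_def : ∀ x, N' x = 0 → x = 0)
    (S : Measure (Fin d → ℝ)) [IsFiniteMeasure S]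
    (hS_sphere : S {a | ¬ ((∀ i, 0 ≤ a i) ∧ N a = 1)} = 0)
    (hS_pos : ∀ j, 0 < ∫ a, a j ∂S)
    (μ : Measure (Fin d → ℝ)) [IsProbabilityMeasure μ]
    (hμ_orthant : μ {x | ¬ ∀ i, 0 ≤ x i} = 0)
    (hμ_cdf : ∀ z : Fin d → ℝ, (∀ i, 0 < z i) →
      μ {x | ∀ i, x i ≤ z i} =
        ENNReal.ofReal (Real.exp (-∫ a, ⨆ i, a i / z i ∂S)))
    (H : Fin p → Fin d → ℝ) (hH : ∀ i j, 0 ≤ H i j) :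
    IsFiniteMeasure (transformedSpectralMeasure N' S H) ∧
    (transformedSpectralMeasure N' S H) {y | ¬ ((∀ i, 0 ≤ y i) ∧ N' y = 1)} = 0 ∧
    ∀ z : Fin p → ℝ, (∀ i, 0 < z i) →
      (μ.map (maxVec H)) {y | ∀ i, y i ≤ z i} =
        ENNReal.ofReal
          (Real.exp (-∫ a, ⨆ i, a i / z i ∂(transformedSpectralMeasure N' S H))) :=
  maxlinear_pushforward_maxstable_general hd hp N N' hN'_tri hN'_smul hN'_def S hS_sphere hS_pos μ
    hμ_orthant hμ_cdf H hH
end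

section
/- Let f₁,…,f_d, g₁,…,g_q ∈ L¹₊([0,1]) with q ≤ d be such that g₁,…,g_q are ∨-linearly independent and ∨-span({f₁,…,f_d}) = ∨-span({g₁,…,g_q}). Then for each j = 1,…,q there exist a constant c_j > 0 and an index i_j ∈ {1,…,d} such that g_j = c_j f_{i_j} Lebesgue-almost everywhere. -/
open MeasureTheory

/-- The ∨-span of a finite family of functions: all functions that agree
Lebesgue-a.e. on `[0,1]` with a max-linear combination (nonnegative
coefficients) of the family. -/
def vSpan {ι : Type*} (f : ι → ℝ → ℝ) : Set (ℝ → ℝ) :=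
  {h | ∃ α : ι → ℝ, (∀ i, 0 ≤ α i) ∧ ∀ᵐ e ∂mu01, h e = ⨆ i, α i * f i e}

/-- ∨-linear independence: no member of the family agrees Lebesgue-a.e. on `[0,1]`
with a max-linear combination (nonnegative coefficients) of the other members. -/
def vIndep {ι : Type*} (f : ι → ℝ → ℝ) : Prop :=
  ¬ ∃ (i : ι) (α : ι → ℝ), (∀ j, 0 ≤ α j) ∧
      ∀ᵐ e ∂mu01, f i e = ⨆ j : {j : ι // j ≠ i}, α ↑j * f (↑j) e

/-- The range of a function on a finite type is bounded above. -/
lemma finRange_bddAbove {ι : Type*} [Finite ι] (f : ι → ℝ) : BddAbove (Set.range f) :=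
  Set.Finite.bddAbove (Set.finite_range f)

/-- A sup over a finite nonempty index set is attained. -/
lemma ciSup_attained {ι : Type*} [Finite ι] [Nonempty ι] (f : ι → ℝ) :
    ∃ i, (⨆ j, f j) = f i ∧ ∀ j, f j ≤ f i := by
  obtain ⟨i, hi⟩ := Finite.exists_max f
  exact ⟨i, le_antisymm (ciSup_le hi) (le_ciSup (finRange_bddAbove f) i), hi⟩

/-- For a nonnegative family, each member equals the max-combination with the
indicator coefficients. -/
lemma single_sup {ι : Type*} [Finite ι] [DecidableEq ι] (h : ι → ℝ → ℝ)
    (hn : ∀ l x, 0 ≤ h l x) (j : ι) (e : ℝ) :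
    h j e = ⨆ l, (if l = j then (1:ℝ) else 0) * h l e := by
  haveI : Nonempty ι := ⟨j⟩
  apply le_antisymm
  · have := le_ciSup (finRange_bddAbove fun l => (if l = j then (1:ℝ) else 0) * h l e) j
    simpa using this
  · refine ciSup_le fun l => ?_
    by_cases hl : l = j <;> simp [hl, hn l e, hn j e]

/-- Each member of a nonnegative family belongs to its own ∨-span. -/
lemma self_mem_vSpan {ι : Type*} [Finite ι] [DecidableEq ι] (h : ι → ℝ → ℝ)
    (hn : ∀ l x, 0 ≤ h l x) (j : ι) : h j ∈ vSpan h := by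
  refine ⟨fun l => if l = j then 1 else 0, fun l => by positivity, ?_⟩
  exact Filter.Eventually.of_forall fun e => single_sup h hn j e

/-- Lemma S2 of the paper: if `g₁, …, g_q ∈ L¹₊([0,1])` are ∨-linearly independent,
`f₁, …, f_d ∈ L¹₊([0,1])` with `q ≤ d`, and both families have the same ∨-span,
then each `g_j` is a positive multiple (a.e.) of some `f_{i_j}`. -/
theorem vIndep_family_eq_scaled_of_vSpan_eq
    {d q : ℕ} (hqd : q ≤ d)
    (f : Fin d → ℝ → ℝ) (g : Fin q → ℝ → ℝ)
    (hf_int : ∀ k, IntegrableOn (f k) (Set.Icc (0:ℝ) 1))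
    (hf_nonneg : ∀ k x, 0 ≤ f k x)
    (hg_int : ∀ j, IntegrableOn (g j) (Set.Icc (0:ℝ) 1))
    (hg_nonneg : ∀ j x, 0 ≤ g j x)
    (hg_indep : vIndep g)
    (hspan : vSpan f = vSpan g) :
    ∀ j : Fin q, ∃ c : ℝ, 0 < c ∧ ∃ i : Fin d,
      ∀ᵐ e ∂mu01, g j e = c * f i e := by
  intro j
  haveI : Nonempty (Fin q) := ⟨j⟩
  haveI : Nonempty (Fin d) := Fin.pos_iff_nonempty.mp (lt_of_lt_of_le j.pos hqd)
  -- g j lies in vSpan f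
  have hgj : g j ∈ vSpan f := by
    rw [hspan]; exact self_mem_vSpan g hg_nonneg j
  obtain ⟨α, hα0, hαae⟩ := hgj
  -- each f i lies in vSpan g
  have hfi : ∀ i, f i ∈ vSpan g := fun i => by
    rw [← hspan]; exact self_mem_vSpan f hf_nonneg i
  choose β hβ0 hβae using hfi
  -- combined a.e. statement
  have hAE : ∀ᵐ e ∂mu01, (g j e = ⨆ i, α i * f i e) ∧ ∀ i, f i e = ⨆ l, β i l * g l e :=
    hαae.and (ae_all_iff.mpr hβae)
  -- the composed coefficients
  set γ : Fin q → ℝ := fun l => ⨆ i, α i * β i l with hγdef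
  have hγ0 : ∀ l, 0 ≤ γ l := fun l => by
    obtain ⟨i₀⟩ := ‹Nonempty (Fin d)›
    exact le_ciSup_of_le (finRange_bddAbove _) i₀ (mul_nonneg (hα0 i₀) (hβ0 i₀ l))
  -- key identity: g j = ⨆ l, γ l * g l a.e.
  have key : ∀ᵐ e ∂mu01, g j e = ⨆ l, γ l * g l e := by
    filter_upwards [hAE] with e he
    obtain ⟨h1, h2⟩ := he
    apply le_antisymm
    · obtain ⟨i₁, hi₁, _⟩ := ciSup_attained fun i => α i * f i e
      obtain ⟨l₁, hl₁, _⟩ := ciSup_attained fun l => β i₁ l * g l e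
      have e1 : g j e = α i₁ * (β i₁ l₁ * g l₁ e) := by
        rw [h1, hi₁, h2 i₁, hl₁]
      have e2 : α i₁ * β i₁ l₁ ≤ γ l₁ :=
        le_ciSup (f := fun i => α i * β i l₁) (finRange_bddAbove _) i₁
      calc g j e = (α i₁ * β i₁ l₁) * g l₁ e := by rw [e1]; ring
        _ ≤ γ l₁ * g l₁ e := mul_le_mul_of_nonneg_right e2 (hg_nonneg l₁ e)
        _ ≤ ⨆ l, γ l * g l e := le_ciSup (f := fun l => γ l * g l e) (finRange_bddAbove _) l₁
    · refine ciSup_le fun l => ?_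
      obtain ⟨i₀, hi₀, _⟩ := ciSup_attained fun i => α i * β i l
      have e3 : β i₀ l * g l e ≤ f i₀ e := by
        rw [h2 i₀]; exact le_ciSup (f := fun l => β i₀ l * g l e) (finRange_bddAbove _) l
      calc γ l * g l e = α i₀ * (β i₀ l * g l e) := by rw [hγdef]; simp only; rw [hi₀]; ring
        _ ≤ α i₀ * f i₀ e := mul_le_mul_of_nonneg_left e3 (hα0 i₀)
        _ ≤ ⨆ i, α i * f i e := le_ciSup (f := fun i => α i * f i e) (finRange_bddAbove _) i₀
        _ = g j e := h1.symm
  -- γ j ≥ 1, else g is ∨-dependent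
  have hγj : 1 ≤ γ j := by
    by_contra hlt
    push_neg at hlt
    apply hg_indep
    refine ⟨j, γ, hγ0, ?_⟩
    filter_upwards [key] with e he
    obtain ⟨l₀, hl₀, hmax⟩ := ciSup_attained fun l => γ l * g l e
    by_cases hlj : l₀ = j
    · -- the max is attained at j, forcing g j e = 0 and all terms zero
      have hz : g j e = γ j * g j e := by conv_lhs => rw [he, hl₀, hlj]
      have h0 : g j e = 0 := by nlinarith [hg_nonneg j e]
      have hall : ∀ l, γ l * g l e ≤ 0 := fun l => by
        have := hmax l
        rw [hlj] at this
        calc γ l * g l e ≤ γ j * g j e := this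
          _ = g j e := hz.symm
          _ = 0 := h0
      by_cases hne : Nonempty {l : Fin q // l ≠ j}
      · rw [h0]
        refine le_antisymm ?_ (ciSup_le fun l => hall l.1)
        obtain ⟨l⟩ := hne
        exact le_ciSup_of_le (finRange_bddAbove _) l
          (mul_nonneg (hγ0 l.1) (hg_nonneg l.1 e))
      · haveI : IsEmpty {l : Fin q // l ≠ j} := not_nonempty_iff.mp hne
        rw [h0, Real.iSup_of_isEmpty]
    · haveI : Nonempty {l : Fin q // l ≠ j} := ⟨⟨l₀, hlj⟩⟩
      apply le_antisymm
      · have : g j e = γ l₀ * g l₀ e := by rw [he, hl₀]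
        rw [this]
        exact le_ciSup (finRange_bddAbove fun l : {l : Fin q // l ≠ j} => γ l.1 * g l.1 e)
          ⟨l₀, hlj⟩
      · refine ciSup_le fun l => ?_
        calc γ l.1 * g l.1 e ≤ γ l₀ * g l₀ e := hmax l.1
          _ = g j e := by rw [he, hl₀]
  -- pick the index attaining γ j
  obtain ⟨i₂, hi₂, _⟩ := ciSup_attained fun i => α i * β i j
  have h1le : 1 ≤ α i₂ * β i₂ j := by
    have : γ j = α i₂ * β i₂ j := hi₂
    linarith [hγj, this ▸ hγj]
  have hαpos : 0 < α i₂ := by nlinarith [hα0 i₂, hβ0 i₂ j]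
  refine ⟨α i₂, hαpos, i₂, ?_⟩
  filter_upwards [hAE] with e he
  obtain ⟨h1, h2⟩ := he
  have e1 : α i₂ * f i₂ e ≤ g j e := by
    rw [h1]; exact le_ciSup (f := fun i => α i * f i e) (finRange_bddAbove _) i₂
  have e2 : β i₂ j * g j e ≤ f i₂ e := by
    rw [h2 i₂]; exact le_ciSup (f := fun l => β i₂ l * g l e) (finRange_bddAbove _) j
  have e3 : α i₂ * (β i₂ j * g j e) ≤ α i₂ * f i₂ e :=
    mul_le_mul_of_nonneg_left e2 (hα0 i₂)
  nlinarith [hg_nonneg j e]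
end

section
/- Fix a norm ‖·‖ on ℝ^d and let 1 ≤ p ≤ d. Let S be a finite Borel measure on S^{d-1}_+ with σ_j := ∫ a_j S(da) > 0 for all j = 1,…,d. Set σ_min := min_j σ_j, σ_max := max_j σ_j and κ := (Σ_{k=p+1}^d σ_k + σ_max)/σ_min. Define R_S(B,W) := ∫_{S^{d-1}_+} Σ_{k=1}^d |(B ⋄ W ⋄ a)_k − a_k| S(da) for B ∈ [0,∞)^{d×p}, W ∈ [0,∞)^{p×d}. Then there exists a pair (B*, W*) ∈ [0,κ]^{d×p} × [0,1]^{p×d} such that R_S(B*, W*) = inf { R_S(B,W) : B ∈ [0,∞)^{d×p}, W ∈ [0,∞)^{p×d} }; in particular, a global minimizer of the reconstruction error exists and can be found in the compact set [0,κ]^{d×p} × [0,1]^{p×d}. -/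
open MeasureTheory Finset

/-- The reconstruction error `R_S(B,W) = ∫ Σ_k |(B ⋄ W ⋄ a)_k − a_k| S(da)` of the
matrix pair `(B,W)` for the max-stable distribution with spectral measure `S`. -/
noncomputable def recErr {d p : ℕ} (S : Measure (Fin d → ℝ))
    (B : Fin d → Fin p → ℝ) (W : Fin p → Fin d → ℝ) : ℝ :=
  ∫ a, ∑ k, |maxVec B (maxVec W a) k - a k| ∂S

/-!
Dividing row `i` of `W` by its maximum `w_i` and multiplying column `i` of `B` by `w_i` leaves
`B ⋄ W ⋄ a` unchanged, so `W` may be taken in `[0,1]`, and each new entry `B_ki w_i` equals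
`B_ki W_il` for an `l` where row `i` of `W` is maximal. If such an entry exceeded `κ`, the `k`-th
error term alone would integrate to at least `B_ki W_il σ_l - σ_k > κ σ_min - σ_max =
Σ_{k>p} σ_k`, which is the error of keeping the first `p` coordinates (`S` lives on the
nonnegative orthant). So the infimum over all nonnegative pairs is the infimum over the compact
box, where the reconstruction error, continuous by dominated convergence since the loss grows
linearly in `‖a‖`, attains its minimum.
-/

lemma abs_iSup_le_of_forall_abs_le {ι : Type*} {f : ι → ℝ} {M : ℝ} (hM : 0 ≤ M)
    (h : ∀ i, |f i| ≤ M) : |⨆ i, f i| ≤ M := by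
  refine abs_le.2 ⟨?_, Real.iSup_le (fun i => (le_abs_self _).trans (h i)) hM⟩
  rcases isEmpty_or_nonempty ι with hι | ⟨⟨i⟩⟩
  · simpa using hM
  · have hbdd : BddAbove (Set.range f) :=
      ⟨M, Set.forall_mem_range.2 fun j => (le_abs_self _).trans (h j)⟩
    exact (abs_le.1 (h i)).1.trans (le_ciSup hbdd i)

lemma continuous_finite_iSup {ι X : Type*} [Finite ι] [TopologicalSpace X] {f : ι → X → ℝ}
    (hf : ∀ i, Continuous (f i)) : Continuous fun x => ⨆ i, f i x := by
  rcases isEmpty_or_nonempty ι with hι | hι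
  · simpa using continuous_const
  · have := Fintype.ofFinite ι
    simp_rw [← Finset.sup'_univ_eq_ciSup]
    exact Continuous.finset_sup'_apply univ_nonempty fun i _ => hf i

theorem IsCompact.exists_isMinOn_of_forall_exists_le {α β : Type*} [TopologicalSpace α]
    [LinearOrder β] [TopologicalSpace β] [ClosedIicTopology β] {f : α → β} {K T : Set α}
    (hK : IsCompact K) (hf : ContinuousOn f K) (hT : T.Nonempty)
    (h : ∀ t ∈ T, ∃ k ∈ K, f k ≤ f t) : ∃ q ∈ K, IsMinOn f T q := by
  obtain ⟨t₀, ht₀⟩ := hT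
  obtain ⟨k₀, hk₀, -⟩ := h t₀ ht₀
  obtain ⟨q, hqK, hq⟩ := hK.exists_isMinOn ⟨k₀, hk₀⟩ hf
  refine ⟨q, hqK, fun t ht => ?_⟩
  obtain ⟨k, hk, hkt⟩ := h t ht
  exact (hq hk).trans hkt

section MaxVec

variable {m n : ℕ}

lemma le_maxVec (H : Fin m → Fin n → ℝ) (x : Fin n → ℝ) (i : Fin m) (l : Fin n) :
    H i l * x l ≤ maxVec H x i :=
  le_ciSup (f := fun l => H i l * x l) (Set.finite_range _).bddAbove l

lemma maxVec_nonneg_s12 {H : Fin m → Fin n → ℝ} {x : Fin n → ℝ} (hH : 0 ≤ H) (hx : 0 ≤ x) :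
    0 ≤ maxVec H x :=
  fun i => Real.iSup_nonneg fun l => mul_nonneg (hH i l) (hx l)

lemma norm_maxVec_le (H : Fin m → Fin n → ℝ) (x : Fin n → ℝ) :
    ‖maxVec H x‖ ≤ ‖H‖ * ‖x‖ := by
  refine (pi_norm_le_iff_of_nonneg (by positivity)).2 fun i => ?_
  refine abs_iSup_le_of_forall_abs_le (by positivity) fun l => ?_
  rw [abs_mul]
  exact mul_le_mul ((norm_le_pi_norm (H i) l).trans (norm_le_pi_norm H i))
    (norm_le_pi_norm x l) (abs_nonneg _) (norm_nonneg _)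

lemma Continuous.maxVec {X : Type*} [TopologicalSpace X] {H : X → Fin m → Fin n → ℝ}
    {x : X → Fin n → ℝ} (hH : Continuous H) (hx : Continuous x) :
    Continuous fun t => _root_.maxVec (H t) (x t) :=
  continuous_pi fun i => continuous_finite_iSup fun l => by fun_prop

end MaxVec

section Rescaling

variable {m n : ℕ}

noncomputable def rowSup (W : Fin m → Fin n → ℝ) (i : Fin m) : ℝ := ⨆ l, W i l

noncomputable def normalizeRows (W : Fin m → Fin n → ℝ) : Fin m → Fin n → ℝ :=
  fun i l => W i l / rowSup W i

lemma le_rowSup (W : Fin m → Fin n → ℝ) (i : Fin m) (l : Fin n) : W i l ≤ rowSup W i :=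
  le_ciSup (f := W i) (Set.finite_range _).bddAbove l

lemma normalizeRows_mem_Icc {W : Fin m → Fin n → ℝ} (hW : 0 ≤ W) (i : Fin m) (l : Fin n) :
    normalizeRows W i l ∈ Set.Icc 0 1 := by
  rcases (Real.iSup_nonneg (hW i)).eq_or_lt with h | h
  · simp [normalizeRows, rowSup, ← h]
  · exact ⟨div_nonneg (hW i l) h.le, div_le_one_of_le₀ (le_rowSup W i l) h.le⟩

-- `W i l / 0 = 0` makes the rows with `rowSup W i = 0` (i.e. `W i = 0`) harmless.
lemma rowSup_mul_maxVec_normalizeRows {W : Fin m → Fin n → ℝ} (hW : 0 ≤ W) (x : Fin n → ℝ)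
    (i : Fin m) : rowSup W i * maxVec (normalizeRows W) x i = maxVec W x i := by
  have h0 : 0 ≤ rowSup W i := Real.iSup_nonneg (hW i)
  rcases h0.eq_or_lt with h | h
  · have hWi : ∀ l, W i l = 0 := fun l => le_antisymm (h ▸ le_rowSup W i l) (hW i l)
    simp [maxVec, normalizeRows, hWi]
  · rw [maxVec, Real.mul_iSup_of_nonneg h.le]
    refine iSup_congr fun l => ?_
    rw [normalizeRows, ← mul_assoc, mul_div_cancel₀ _ h.ne']

lemma maxVec_mul_rowSup_maxVec_normalizeRows (B : Fin m → Fin n → ℝ)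
    {W : Fin n → Fin m → ℝ} (hW : 0 ≤ W) (x : Fin m → ℝ) :
    maxVec (fun k i => B k i * rowSup W i) (maxVec (normalizeRows W) x) =
      maxVec B (maxVec W x) := by
  funext k
  refine iSup_congr fun i => ?_
  rw [mul_assoc, rowSup_mul_maxVec_normalizeRows hW]

lemma exists_rowSup_eq [Nonempty (Fin n)] (W : Fin m → Fin n → ℝ) (i : Fin m) :
    ∃ l, rowSup W i = W i l :=
  (exists_eq_ciSup_of_finite (f := W i)).imp fun _ h => h.symm

end Rescaling

section TruncId

variable {m n : ℕ}

def truncId (m n : ℕ) : Fin m → Fin n → ℝ := fun i j => if (i : ℕ) = j then 1 else 0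

lemma truncId_mem_Icc (i : Fin m) (j : Fin n) : truncId m n i j ∈ Set.Icc 0 1 := by
  unfold truncId; split_ifs <;> simp

lemma maxVec_truncId_of_eq {x : Fin n → ℝ} (hx : 0 ≤ x) {i : Fin m} {j : Fin n}
    (hij : (i : ℕ) = j) : maxVec (truncId m n) x i = x j := by
  refine le_antisymm (Real.iSup_le (fun l => ?_) (hx j)) ?_
  · by_cases h : (i : ℕ) = l
    · obtain rfl : j = l := Fin.ext (hij.symm.trans h)
      simp [truncId, hij]
    · simpa [truncId, h] using hx j
  · simpa [truncId, hij] using le_maxVec (truncId m n) x i j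

lemma maxVec_truncId_of_forall_ne (x : Fin n → ℝ) {i : Fin m}
    (hi : ∀ j : Fin n, (i : ℕ) ≠ j) : maxVec (truncId m n) x i = 0 := by
  simp [maxVec, truncId, hi]

lemma maxVec_truncId_maxVec_truncId {d p : ℕ} {a : Fin d → ℝ} (ha : 0 ≤ a) (k : Fin d) :
    maxVec (truncId d p) (maxVec (truncId p d) a) k = if (k : ℕ) < p then a k else 0 := by
  split_ifs with hk
  · have hinner : maxVec (truncId p d) a ⟨k, hk⟩ = a k := maxVec_truncId_of_eq ha rfl
    rw [maxVec_truncId_of_eq (i := k) (j := (⟨k, hk⟩ : Fin p))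
      (maxVec_nonneg_s12 (fun _ _ => (truncId_mem_Icc _ _).1) ha) rfl, hinner]
  · exact maxVec_truncId_of_forall_ne _ fun j h => hk (h ▸ j.2)

end TruncId

section RecLoss

variable {d p : ℕ}

noncomputable def recLoss (B : Fin d → Fin p → ℝ) (W : Fin p → Fin d → ℝ) (a : Fin d → ℝ) :
    ℝ :=
  ∑ k, |maxVec B (maxVec W a) k - a k|

lemma recErr_eq_integral_recLoss (S : Measure (Fin d → ℝ)) (B : Fin d → Fin p → ℝ)
    (W : Fin p → Fin d → ℝ) : recErr S B W = ∫ a, recLoss B W a ∂S :=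
  rfl

lemma recLoss_nonneg (B : Fin d → Fin p → ℝ) (W : Fin p → Fin d → ℝ) (a : Fin d → ℝ) :
    0 ≤ recLoss B W a :=
  sum_nonneg fun _ _ => abs_nonneg _

lemma sub_le_recLoss (B : Fin d → Fin p → ℝ) (W : Fin p → Fin d → ℝ) (a : Fin d → ℝ)
    (k : Fin d) : maxVec B (maxVec W a) k - a k ≤ recLoss B W a :=
  (le_abs_self _).trans <|
    single_le_sum (f := fun k => |maxVec B (maxVec W a) k - a k|) (fun _ _ => abs_nonneg _)
      (mem_univ k)

lemma recLoss_le_mul_norm (B : Fin d → Fin p → ℝ) (W : Fin p → Fin d → ℝ) (a : Fin d → ℝ) :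
    recLoss B W a ≤ d * (‖B‖ * ‖W‖ + 1) * ‖a‖ := by
  have hterm : ∀ k, |maxVec B (maxVec W a) k - a k| ≤ (‖B‖ * ‖W‖ + 1) * ‖a‖ := fun k =>
    calc |maxVec B (maxVec W a) k - a k|
        ≤ ‖maxVec B (maxVec W a)‖ + ‖a‖ :=
          (abs_sub _ _).trans
            (add_le_add (norm_le_pi_norm (maxVec B (maxVec W a)) k) (norm_le_pi_norm a k))
      _ ≤ ‖B‖ * (‖W‖ * ‖a‖) + ‖a‖ := by
          gcongr
          exact (norm_maxVec_le _ _).trans (by gcongr; exact norm_maxVec_le W a)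
      _ = (‖B‖ * ‖W‖ + 1) * ‖a‖ := by ring
  calc recLoss B W a ≤ ∑ _k : Fin d, (‖B‖ * ‖W‖ + 1) * ‖a‖ :=
        sum_le_sum fun k _ => hterm k
    _ = d * (‖B‖ * ‖W‖ + 1) * ‖a‖ := by simp [mul_assoc]

lemma Continuous.recLoss {X : Type*} [TopologicalSpace X] {B : X → Fin d → Fin p → ℝ}
    {W : X → Fin p → Fin d → ℝ} {a : X → Fin d → ℝ} (hB : Continuous B) (hW : Continuous W)
    (ha : Continuous a) : Continuous fun t => _root_.recLoss (B t) (W t) (a t) := by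
  have h := hB.maxVec (hW.maxVec ha)
  unfold _root_.recLoss
  fun_prop

lemma recLoss_truncId {a : Fin d → ℝ} (ha : 0 ≤ a) :
    recLoss (truncId d p) (truncId p d) a =
      ∑ k ∈ univ.filter (fun k : Fin d => p ≤ (k : ℕ)), a k := by
  rw [recLoss, sum_filter]
  refine sum_congr rfl fun k _ => ?_
  rw [maxVec_truncId_maxVec_truncId ha]
  split_ifs <;> first | omega | simp [abs_of_nonneg (ha k)]

lemma recLoss_mul_rowSup_normalizeRows (B : Fin d → Fin p → ℝ) {W : Fin p → Fin d → ℝ}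
    (hW : 0 ≤ W) (a : Fin d → ℝ) :
    recLoss (fun k i => B k i * rowSup W i) (normalizeRows W) a = recLoss B W a := by
  rw [recLoss, recLoss, maxVec_mul_rowSup_maxVec_normalizeRows B hW]

end RecLoss

section RecErr

variable {d p : ℕ} {S : Measure (Fin d → ℝ)}

noncomputable def tailMass (S : Measure (Fin d → ℝ)) (p : ℕ) : ℝ :=
  ∑ k ∈ univ.filter (fun k : Fin d => p ≤ (k : ℕ)), ∫ a, a k ∂S

lemma integrable_recLoss (hS : ∀ j, Integrable (fun a => a j) S) (B : Fin d → Fin p → ℝ)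
    (W : Fin p → Fin d → ℝ) : Integrable (recLoss B W) S := by
  refine Integrable.mono' (((Integrable.of_eval hS).norm).const_mul (d * (‖B‖ * ‖W‖ + 1)))
    (continuous_const.recLoss continuous_const continuous_id).aestronglyMeasurable
    (ae_of_all _ fun a => ?_)
  rw [Real.norm_of_nonneg (recLoss_nonneg B W a)]
  exact recLoss_le_mul_norm B W a

lemma continuous_recErr (hS : ∀ j, Integrable (fun a => a j) S) :
    Continuous fun q : (Fin d → Fin p → ℝ) × (Fin p → Fin d → ℝ) => recErr S q.1 q.2 := by
  simp_rw [recErr_eq_integral_recLoss]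
  refine continuous_iff_continuousAt.2 fun q₀ => ?_
  set R := ‖q₀‖ + 1
  refine continuousAt_of_dominated (bound := fun a => d * (R * R + 1) * ‖a‖)
    (Filter.Eventually.of_forall fun q => (integrable_recLoss hS q.1 q.2).aestronglyMeasurable)
    ?_ (((Integrable.of_eval hS).norm).const_mul _)
    (ae_of_all _ fun a => (continuous_fst.recLoss continuous_snd continuous_const).continuousAt)
  filter_upwards [Metric.ball_mem_nhds q₀ one_pos] with q hq
  have hqR : ‖q‖ ≤ R := by
    linarith [norm_sub_norm_le q q₀, mem_ball_iff_norm.1 hq]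
  refine ae_of_all _ fun a => ?_
  rw [Real.norm_of_nonneg (recLoss_nonneg _ _ a)]
  refine (recLoss_le_mul_norm q.1 q.2 a).trans ?_
  gcongr
  · exact (norm_fst_le q).trans hqR
  · exact (norm_snd_le q).trans hqR

lemma mul_mul_integral_sub_integral_le_recErr (hS : ∀ j, Integrable (fun a => a j) S)
    {B : Fin d → Fin p → ℝ} (hB : 0 ≤ B) (W : Fin p → Fin d → ℝ) (k : Fin d) (i : Fin p)
    (l : Fin d) :
    B k i * W i l * ∫ a, a l ∂S - ∫ a, a k ∂S ≤ recErr S B W := by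
  have hpt : ∀ a, B k i * W i l * a l - a k ≤ recLoss B W a := fun a =>
    calc B k i * W i l * a l - a k
        ≤ B k i * maxVec W a i - a k := by
          rw [mul_assoc]; gcongr; exacts [hB k i, le_maxVec W a i l]
      _ ≤ maxVec B (maxVec W a) k - a k := by gcongr; exact le_maxVec B _ k i
      _ ≤ recLoss B W a := sub_le_recLoss B W a k
  rw [← integral_const_mul, ← integral_sub ((hS l).const_mul _) (hS k)]
  exact integral_mono ((hS l).const_mul _ |>.sub (hS k)) (integrable_recLoss hS B W) hpt

lemma recErr_truncId (hS : ∀ j, Integrable (fun a => a j) S) (hS_nonneg : ∀ᵐ a ∂S, 0 ≤ a) :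
    recErr S (truncId d p) (truncId p d) = tailMass S p := by
  rw [recErr_eq_integral_recLoss, tailMass, ← integral_finsetSum _ fun k _ => hS k]
  exact integral_congr_ae (hS_nonneg.mono fun a ha => recLoss_truncId ha)

lemma recErr_mul_rowSup_normalizeRows (B : Fin d → Fin p → ℝ) {W : Fin p → Fin d → ℝ}
    (hW : 0 ≤ W) :
    recErr S (fun k i => B k i * rowSup W i) (normalizeRows W) = recErr S B W := by
  simp_rw [recErr_eq_integral_recLoss, recLoss_mul_rowSup_normalizeRows B hW]

end RecErr

section Box

variable {d p : ℕ} {S : Measure (Fin d → ℝ)}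

noncomputable def boxBound (S : Measure (Fin d → ℝ)) (p : ℕ) : ℝ :=
  (tailMass S p + ⨆ j : Fin d, ∫ a, a j ∂S) / ⨅ j : Fin d, ∫ a, a j ∂S

def matrixBox (d p : ℕ) (κ : ℝ) : Set ((Fin d → Fin p → ℝ) × (Fin p → Fin d → ℝ)) :=
  {q | (∀ k i, q.1 k i ∈ Set.Icc 0 κ) ∧ ∀ i l, q.2 i l ∈ Set.Icc 0 1}

lemma isCompact_matrixBox (κ : ℝ) : IsCompact (matrixBox d p κ) := by
  convert isCompact_Icc (a := (0 : (Fin d → Fin p → ℝ) × (Fin p → Fin d → ℝ)))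
    (b := (fun _ _ => κ, fun _ _ => 1)) using 1
  ext q
  simp only [matrixBox, Set.mem_Icc, Set.mem_ofPred_eq, Prod.le_def, Pi.le_def, Prod.fst_zero,
    Prod.snd_zero, Pi.zero_apply, forall_and]
  tauto

lemma iInf_integral_pos [Nonempty (Fin d)] (hS_pos : ∀ j, 0 < ∫ a, a j ∂S) :
    0 < ⨅ j : Fin d, ∫ a, a j ∂S := by
  obtain ⟨j, hj⟩ := exists_eq_ciInf_of_finite (f := fun j : Fin d => ∫ a, a j ∂S)
  exact hj ▸ hS_pos j

lemma one_le_boxBound [Nonempty (Fin d)] (hS_pos : ∀ j, 0 < ∫ a, a j ∂S) :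
    1 ≤ boxBound S p := by
  obtain ⟨j⟩ := ‹Nonempty (Fin d)›
  have hfin := Set.finite_range fun j : Fin d => ∫ a, a j ∂S
  rw [boxBound, one_le_div (iInf_integral_pos hS_pos)]
  have htail : 0 ≤ tailMass S p := sum_nonneg fun k _ => (hS_pos k).le
  linarith [ciInf_le hfin.bddBelow j, le_ciSup hfin.bddAbove j]

lemma boxBound_mul_iInf [Nonempty (Fin d)] (hS_pos : ∀ j, 0 < ∫ a, a j ∂S) :
    boxBound S p * ⨅ j : Fin d, ∫ a, a j ∂S = tailMass S p + ⨆ j : Fin d, ∫ a, a j ∂S :=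
  div_mul_cancel₀ _ (iInf_integral_pos hS_pos).ne'

lemma exists_mem_matrixBox_recErr_le (hS_nonneg : ∀ᵐ a ∂S, 0 ≤ a)
    (hS_pos : ∀ j, 0 < ∫ a, a j ∂S) {B : Fin d → Fin p → ℝ} {W : Fin p → Fin d → ℝ}
    (hB : 0 ≤ B) (hW : 0 ≤ W) :
    ∃ q ∈ matrixBox d p (boxBound S p), recErr S q.1 q.2 ≤ recErr S B W := by
  have hS j : Integrable (fun a => a j) S := .of_integral_ne_zero (hS_pos j).ne'
  by_cases hsmall : ∀ k i, B k i * rowSup W i ≤ boxBound S p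
  · exact ⟨(_, normalizeRows W),
      ⟨fun k i => ⟨mul_nonneg (hB k i) (Real.iSup_nonneg (hW i)), hsmall k i⟩,
        normalizeRows_mem_Icc hW⟩,
      (recErr_mul_rowSup_normalizeRows B hW).le⟩
  push Not at hsmall
  obtain ⟨k, i, hki⟩ := hsmall
  have : Nonempty (Fin d) := ⟨k⟩
  obtain ⟨l, hl⟩ := exists_rowSup_eq W i
  have hfin := Set.finite_range fun j : Fin d => ∫ a, a j ∂S
  refine ⟨(truncId d p, truncId p d), ⟨fun k i => ?_, truncId_mem_Icc⟩, ?_⟩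
  · exact ⟨(truncId_mem_Icc k i).1, (truncId_mem_Icc k i).2.trans (one_le_boxBound hS_pos)⟩
  calc recErr S (truncId d p) (truncId p d)
      = boxBound S p * (⨅ j : Fin d, ∫ a, a j ∂S) - ⨆ j : Fin d, ∫ a, a j ∂S := by
        rw [recErr_truncId hS hS_nonneg, boxBound_mul_iInf hS_pos]; ring
    _ ≤ B k i * W i l * ∫ a, a l ∂S - ∫ a, a k ∂S := by
        rw [← hl]
        exact sub_le_sub (mul_le_mul hki.le (ciInf_le hfin.bddBelow l)
          (iInf_integral_pos hS_pos).le (mul_nonneg (hB k i) (Real.iSup_nonneg (hW i))))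
          (le_ciSup hfin.bddAbove k)
    _ ≤ recErr S B W := mul_mul_integral_sub_integral_le_recErr hS hB W k i l

end Box

theorem exists_global_minimizer_recErr_in_compact_general
    {p d : ℕ}
    (N : (Fin d → ℝ) → ℝ)
    (S : Measure (Fin d → ℝ))
    (hS_sphere : S {a | ¬ ((∀ i, 0 ≤ a i) ∧ N a = 1)} = 0)
    (hS_pos : ∀ j, 0 < ∫ a, a j ∂S) :
    ∃ (B : Fin d → Fin p → ℝ) (W : Fin p → Fin d → ℝ),
      (∀ i j, B i j ∈ Set.Icc (0:ℝ)
        (((∑ k ∈ univ.filter (fun k : Fin d => p ≤ (k : ℕ)), ∫ a, a k ∂S) +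
            ⨆ j : Fin d, ∫ a, a j ∂S) / ⨅ j : Fin d, ∫ a, a j ∂S)) ∧
      (∀ i j, W i j ∈ Set.Icc (0:ℝ) 1) ∧
      recErr S B W =
        sInf {r : ℝ | ∃ (B' : Fin d → Fin p → ℝ) (W' : Fin p → Fin d → ℝ),
          (∀ i j, 0 ≤ B' i j) ∧ (∀ i j, 0 ≤ W' i j) ∧ r = recErr S B' W'} := by
  have hS_nonneg : ∀ᵐ a ∂S, 0 ≤ a := (ae_iff.2 hS_sphere).mono fun a ha => ha.1
  have hS j : Integrable (fun a => a j) S := .of_integral_ne_zero (hS_pos j).ne'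
  obtain ⟨⟨B, W⟩, ⟨hB, hW⟩, hmin⟩ :=
    (isCompact_matrixBox (boxBound S p)).exists_isMinOn_of_forall_exists_le
      (continuous_recErr hS).continuousOn (Set.nonempty_Ici (a := 0))
      fun q hq => exists_mem_matrixBox_recErr_le hS_nonneg hS_pos hq.1 hq.2
  refine ⟨B, W, hB, hW, (IsLeast.csInf_eq ⟨?_, ?_⟩).symm⟩
  · exact ⟨B, W, fun k i => (hB k i).1, fun i l => (hW i l).1, rfl⟩
  · rintro r ⟨B', W', hB', hW', rfl⟩
    exact isMinOn_iff.1 hmin (B', W') ⟨hB', hW'⟩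

/-- Lemma S3 of the paper: the reconstruction error of max-stable PCA with `p` components
attains its global infimum (over all nonnegative matrix pairs) at some pair
`(B*, W*) ∈ [0,κ]^{d×p} × [0,1]^{p×d}` with
`κ = (Σ_{k=p+1}^d σ_k + σ_max)/σ_min`. -/
theorem exists_global_minimizer_recErr_in_compact
    {p d : ℕ} (hp : 1 ≤ p) (hpd : p ≤ d)
    (N : (Fin d → ℝ) → ℝ)
    (hN_tri : ∀ x y, N (x + y) ≤ N x + N y)
    (hN_smul : ∀ (c : ℝ) (x), N (c • x) = |c| * N x)
    (hN_def : ∀ x, N x = 0 → x = 0)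
    (S : Measure (Fin d → ℝ)) [IsFiniteMeasure S]
    (hS_sphere : S {a | ¬ ((∀ i, 0 ≤ a i) ∧ N a = 1)} = 0)
    (hS_pos : ∀ j, 0 < ∫ a, a j ∂S) :
    ∃ (B : Fin d → Fin p → ℝ) (W : Fin p → Fin d → ℝ),
      (∀ i j, B i j ∈ Set.Icc (0:ℝ)
        (((∑ k ∈ univ.filter (fun k : Fin d => p ≤ (k : ℕ)), ∫ a, a k ∂S) +
            ⨆ j : Fin d, ∫ a, a j ∂S) / ⨅ j : Fin d, ∫ a, a j ∂S)) ∧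
      (∀ i j, W i j ∈ Set.Icc (0:ℝ) 1) ∧
      recErr S B W =
        sInf {r : ℝ | ∃ (B' : Fin d → Fin p → ℝ) (W' : Fin p → Fin d → ℝ),
          (∀ i j, 0 ≤ B' i j) ∧ (∀ i j, 0 ≤ W' i j) ∧ r = recErr S B' W'} :=
  exists_global_minimizer_recErr_in_compact_general N S hS_sphere hS_pos
end

section
/- Define F: [0,∞)² × [0,∞)² → ℝ by F((B₁,B₂),(W₁,W₂)) := |B₁W₁ − 1| + |B₂W₂ − 1| + B₁W₂ + B₂W₁. Then the minimum of F over all ((B₁,B₂),(W₁,W₂)) ∈ [0,∞)² × [0,∞)² equals 1, and F((B₁,B₂),(W₁,W₂)) = 1 holds exactly when there exists λ > 0 such that either (B₁,B₂) = (λ,0) and (W₁,W₂) = (λ⁻¹,0), or (B₁,B₂) = (0,λ) and (W₁,W₂) = (0,λ⁻¹). -/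
lemma key (a b c d : ℝ) (ha : 0 ≤ a) (hb : 0 ≤ b) (hc : 0 ≤ c) (hd : 0 ≤ d)
    (hprod : a * b = c * d) :
    1 ≤ |a - 1| + |b - 1| + c + d ∧
    (|a - 1| + |b - 1| + c + d = 1 →
      (a = 1 ∧ b = 0 ∧ c = 0 ∧ d = 0) ∨ (a = 0 ∧ b = 1 ∧ c = 0 ∧ d = 0)) := by
  rcases abs_cases (a - 1) with ⟨h1, h1'⟩ | ⟨h1, h1'⟩ <;>
    rcases abs_cases (b - 1) with ⟨h2, h2'⟩ | ⟨h2, h2'⟩ <;>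
      rw [h1, h2]
  · -- a ≥ 1, b ≥ 1
    constructor
    · nlinarith [sq_nonneg (c - d), sq_nonneg (c + d - 2)]
    · intro h; exfalso
      nlinarith [sq_nonneg (c - d), sq_nonneg (c + d - 2)]
  · -- a ≥ 1, b < 1
    constructor
    · nlinarith [sq_nonneg (c - d), mul_nonneg hc hd, mul_nonneg ha hb,
        mul_nonneg (mul_nonneg ha hb) hb, sq_nonneg (a - 1), sq_nonneg (c + d)]
    · intro h
      have hb0 : b = 0 := by
        by_contra hb0
        have hb' : 0 < b := lt_of_le_of_ne hb (Ne.symm hb0)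
        nlinarith [sq_nonneg (c - d), mul_nonneg hc hd,
          mul_nonneg (mul_nonneg (sub_nonneg.2 (by linarith : (1:ℝ) ≤ a)) hb'.le) hb'.le]
      left
      have hcd : c * d = 0 := by rw [← hprod, hb0]; ring
      have : a - 1 + c + d = 0 := by rw [hb0] at h; linarith
      have ha1 : a = 1 := by nlinarith
      have hc0 : c = 0 := by nlinarith
      exact ⟨ha1, hb0, hc0, by nlinarith⟩
  · -- a < 1, b ≥ 1
    constructor
    · nlinarith [sq_nonneg (c - d), mul_nonneg hc hd, mul_nonneg ha hb,
        mul_nonneg (mul_nonneg hb ha) ha, sq_nonneg (b - 1), sq_nonneg (c + d)]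
    · intro h
      have ha0 : a = 0 := by
        by_contra ha0
        have ha' : 0 < a := lt_of_le_of_ne ha (Ne.symm ha0)
        nlinarith [sq_nonneg (c - d), mul_nonneg hc hd,
          mul_nonneg (mul_nonneg (sub_nonneg.2 (by linarith : (1:ℝ) ≤ b)) ha'.le) ha'.le]
      right
      have hcd : c * d = 0 := by rw [← hprod, ha0]; ring
      have : b - 1 + c + d = 0 := by rw [ha0] at h; linarith
      have hb1 : b = 1 := by nlinarith
      have hc0 : c = 0 := by nlinarith
      exact ⟨ha0, hb1, hc0, by nlinarith⟩
  · -- a < 1, b < 1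
    constructor
    · nlinarith [sq_nonneg (c - d), mul_nonneg hc hd, mul_nonneg ha hb,
        sq_nonneg (a - b), sq_nonneg (c + d)]
    · intro h; exfalso
      nlinarith [sq_nonneg (c - d), mul_nonneg hc hd, sq_nonneg (a - b)]


/-- Example S1 of the paper: the reconstruction error
`F(B,W) = |B₁W₁ − 1| + |B₂W₂ − 1| + B₁W₂ + B₂W₁` of max-stable PCA with one component
for a bivariate max-stable vector with independent standard 1-Fréchet components has
minimum value `1` over `[0,∞)² × [0,∞)²`, attained exactly at
`B = (λ,0), W = (λ⁻¹,0)` or `B = (0,λ), W = (0,λ⁻¹)` for some `λ > 0`. -/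
theorem bivariate_independent_maxPCA_minimizers :
    IsLeast {r : ℝ | ∃ B₁ B₂ W₁ W₂ : ℝ,
        0 ≤ B₁ ∧ 0 ≤ B₂ ∧ 0 ≤ W₁ ∧ 0 ≤ W₂ ∧
        r = |B₁ * W₁ - 1| + |B₂ * W₂ - 1| + B₁ * W₂ + B₂ * W₁} 1 ∧
    ∀ B₁ B₂ W₁ W₂ : ℝ, 0 ≤ B₁ → 0 ≤ B₂ → 0 ≤ W₁ → 0 ≤ W₂ →
      (|B₁ * W₁ - 1| + |B₂ * W₂ - 1| + B₁ * W₂ + B₂ * W₁ = 1 ↔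
        ∃ l : ℝ, 0 < l ∧
          ((B₁ = l ∧ B₂ = 0 ∧ W₁ = l⁻¹ ∧ W₂ = 0) ∨
           (B₁ = 0 ∧ B₂ = l ∧ W₁ = 0 ∧ W₂ = l⁻¹))) := by
  constructor
  · constructor
    · exact ⟨1, 0, 1, 0, by norm_num⟩
    · rintro r ⟨B₁, B₂, W₁, W₂, h1, h2, h3, h4, rfl⟩
      have := (key (B₁ * W₁) (B₂ * W₂) (B₁ * W₂) (B₂ * W₁)
        (mul_nonneg h1 h3) (mul_nonneg h2 h4) (mul_nonneg h1 h4) (mul_nonneg h2 h3)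
        (by ring)).1
      linarith
  · intro B₁ B₂ W₁ W₂ h1 h2 h3 h4
    constructor
    · intro h
      have hk := (key (B₁ * W₁) (B₂ * W₂) (B₁ * W₂) (B₂ * W₁)
        (mul_nonneg h1 h3) (mul_nonneg h2 h4) (mul_nonneg h1 h4) (mul_nonneg h2 h3)
        (by ring)).2 h
      rcases hk with ⟨ha, hb, hc, hd⟩ | ⟨ha, hb, hc, hd⟩
      · have hB₁ : B₁ ≠ 0 := fun h0 => by rw [h0] at ha; norm_num at ha
        have hW₁ : W₁ ≠ 0 := fun h0 => by rw [h0] at ha; norm_num at ha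
        have hW₂ : W₂ = 0 := (mul_eq_zero.mp hc).resolve_left hB₁
        have hB₂ : B₂ = 0 := (mul_eq_zero.mp hd).resolve_right hW₁
        exact ⟨B₁, lt_of_le_of_ne h1 (Ne.symm hB₁), Or.inl ⟨rfl, hB₂,
          eq_inv_of_mul_eq_one_right (by linarith [ha] : B₁ * W₁ = 1) ▸ rfl, hW₂⟩⟩
      · have hB₂ : B₂ ≠ 0 := fun h0 => by rw [h0] at hb; norm_num at hb
        have hW₂ : W₂ ≠ 0 := fun h0 => by rw [h0] at hb; norm_num at hb
        have hW₁ : W₁ = 0 := (mul_eq_zero.mp hd).resolve_left hB₂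
        have hB₁ : B₁ = 0 := (mul_eq_zero.mp hc).resolve_right hW₂
        exact ⟨B₂, lt_of_le_of_ne h2 (Ne.symm hB₂), Or.inr ⟨hB₁, rfl, hW₁,
          eq_inv_of_mul_eq_one_right (by linarith [hb] : B₂ * W₂ = 1) ▸ rfl⟩⟩
    · rintro ⟨l, hl, ⟨rfl, rfl, rfl, rfl⟩ | ⟨rfl, rfl, rfl, rfl⟩⟩ <;>
        rw [mul_inv_cancel₀ (ne_of_gt hl)] <;> norm_num
end

section
/- Let A ∈ [0,∞)^{3×2} be the matrix with rows (1,0), (0,1), (1/2,1/2). If H ∈ [0,∞)^{3×3} is symmetric (H_{ij} = H_{ji} for all i,j) and satisfies H ⋄ A = A, then H is the 3×3 identity matrix. -/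
/-- Max-linear matrix product: `(B ⋄ C) i j = max_l B i l * C l j`. -/
noncomputable def maxMat {m n k : ℕ} (B : Fin m → Fin n → ℝ) (C : Fin n → Fin k → ℝ) :
    Fin m → Fin k → ℝ :=
  fun i j => ⨆ l, B i l * C l j

section MaxMat

variable {m n k : ℕ} {B : Fin m → Fin n → ℝ} {C : Fin n → Fin k → ℝ}

theorem le_maxMat (i : Fin m) (l : Fin n) (j : Fin k) : B i l * C l j ≤ maxMat B C i j :=
  le_ciSup (f := fun l => B i l * C l j) (Set.finite_range _).bddAbove l

theorem maxMat_le [Nonempty (Fin n)] {i : Fin m} {j : Fin k} {c : ℝ}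
    (h : ∀ l, B i l * C l j ≤ c) : maxMat B C i j ≤ c :=
  ciSup_le h

theorem eq_zero_of_maxMat_eq_zero {i : Fin m} {l : Fin n} {j : Fin k} (hB : 0 ≤ B i l)
    (hC : 0 < C l j) (h : maxMat B C i j = 0) : B i l = 0 := by
  have hprod : B i l * C l j ≤ 0 := h ▸ le_maxMat i l j
  exact le_antisymm (nonpos_of_mul_nonpos_left hprod hC) hB

theorem maxMat_apply_of_forall_ne_eq_zero {i : Fin m} {l : Fin n} {j : Fin k}
    (hrow : ∀ l', l' ≠ l → B i l' = 0) (hterm : 0 ≤ B i l * C l j) :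
    maxMat B C i j = B i l * C l j := by
  have : Nonempty (Fin n) := ⟨l⟩
  refine le_antisymm (maxMat_le fun l' => ?_) (le_maxMat i l j)
  by_cases hl' : l' = l
  · rw [hl']
  · rw [hrow l' hl', zero_mul]
    exact hterm

theorem eq_one_of_maxMat_apply_eq {i : Fin m} {l : Fin n} {j : Fin k} (hB : 0 ≤ B i l)
    (hrow : ∀ l', l' ≠ l → B i l' = 0) (hC : 0 < C l j) (h : maxMat B C i j = C l j) :
    B i l = 1 := by
  rw [maxMat_apply_of_forall_ne_eq_zero hrow (mul_nonneg hB hC.le)] at h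
  exact (mul_eq_right₀ hC.ne').mp h

end MaxMat

/-- Core computation of Example S2 of the paper: if a symmetric nonnegative `3×3` matrix
`H` satisfies `H ⋄ A = A` for the matrix `A` with rows `(1,0)`, `(0,1)`, `(1/2,1/2)`,
then `H` is the identity matrix. -/
theorem symmetric_maxlinear_fixing_A_is_identity
    (H : Fin 3 → Fin 3 → ℝ)
    (hH_nonneg : ∀ i j, 0 ≤ H i j)
    (hH_symm : ∀ i j, H i j = H j i)
    (hfix : maxMat H (![![(1:ℝ), 0], ![0, 1], ![1/2, 1/2]])
      = ![![(1:ℝ), 0], ![0, 1], ![1/2, 1/2]]) :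
    H = fun i j => if i = j then 1 else 0 := by
  set A : Fin 3 → Fin 2 → ℝ := ![![(1:ℝ), 0], ![0, 1], ![1/2, 1/2]]
  have hA i j : maxMat H A i j = A i j := congrFun₂ hfix i j
  have half_pos : (0:ℝ) < 1/2 := by norm_num
  -- The zero entries `A 0 1` and `A 1 0` kill rows 0 and 1 off the diagonal; symmetry does row 2.
  have h01 : H 0 1 = 0 := eq_zero_of_maxMat_eq_zero (hH_nonneg _ _) (j := 1) zero_lt_one (hA 0 1)
  have h02 : H 0 2 = 0 := eq_zero_of_maxMat_eq_zero (hH_nonneg _ _) (j := 1) half_pos (hA 0 1)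
  have h10 : H 1 0 = 0 := eq_zero_of_maxMat_eq_zero (hH_nonneg _ _) (j := 0) zero_lt_one (hA 1 0)
  have h12 : H 1 2 = 0 := eq_zero_of_maxMat_eq_zero (hH_nonneg _ _) (j := 0) half_pos (hA 1 0)
  have hoff : ∀ i j, i ≠ j → H i j = 0 := by
    intro i j hij
    fin_cases i <;> fin_cases j <;>
      first | exact absurd rfl hij | assumption | (rw [hH_symm]; assumption)
  have hdiag {i : Fin 3} (j) (hC : 0 < A i j) : H i i = 1 :=
    eq_one_of_maxMat_apply_eq (hH_nonneg i i) (fun l hl => hoff i l hl.symm) hC (hA i j)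
  funext i j
  split_ifs with hij
  · subst hij
    fin_cases i
    exacts [hdiag 0 zero_lt_one, hdiag 1 zero_lt_one, hdiag 0 half_pos]
  · exact hoff i j hij
end

section
/- There exist no matrices B ∈ [0,∞)^{3×2} and W ∈ [0,∞)^{2×3} such that B ⋄ W equals the 3×3 identity matrix. -/
lemma iSup_fin2 (f : Fin 2 → ℝ) : (⨆ l, f l) = max (f 0) (f 1) := by
  apply le_antisymm
  · exact ciSup_le fun l => by fin_cases l <;> simp [le_max_left, le_max_right]
  · exact max_le (le_ciSup (Set.Finite.bddAbove (Set.finite_range f)) 0)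
      (le_ciSup (Set.Finite.bddAbove (Set.finite_range f)) 1)

/-- Claim used in Example S2 of the paper: the `3×3` identity matrix admits no max-linear
factorization through rank `2` with nonnegative factors. -/
theorem identity_not_maxlinear_rank_two :
    ¬ ∃ (B : Fin 3 → Fin 2 → ℝ) (W : Fin 2 → Fin 3 → ℝ),
        (∀ i j, 0 ≤ B i j) ∧ (∀ i j, 0 ≤ W i j) ∧
        maxMat B W = fun i j => if i = j then (1:ℝ) else 0 := by
  rintro ⟨B, W, hB, hW, h⟩
  have h' : ∀ i j, max (B i 0 * W 0 j) (B i 1 * W 1 j) = if i = j then (1:ℝ) else 0 := by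
    intro i j
    have := congrFun (congrFun h i) j
    rwa [maxMat, iSup_fin2 (fun l => B i l * W l j)] at this
  have diag : ∀ i : Fin 3, ∃ l, B i l * W l i = 1 := by
    intro i
    have hi := h' i i
    rw [if_pos rfl] at hi
    rcases max_choice (B i 0 * W 0 i) (B i 1 * W 1 i) with hc | hc
    · exact ⟨0, by rw [← hi, hc]⟩
    · exact ⟨1, by rw [← hi, hc]⟩
  have off : ∀ i j : Fin 3, i ≠ j → ∀ l, B i l * W l j = 0 := by
    intro i j hij l
    have hij' := h' i j
    rw [if_neg hij] at hij'
    have h1 : B i l * W l j ≤ 0 := by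
      fin_cases l
      · rw [← hij']; exact le_max_left _ _
      · rw [← hij']; exact le_max_right _ _
    exact le_antisymm h1 (mul_nonneg (hB _ _) (hW _ _))
  choose l hl using diag
  obtain ⟨i, j, hij, hlij⟩ := Fintype.exists_ne_map_eq_of_card_lt l (by simp)
  have h0 := off i j hij (l i)
  rcases mul_eq_zero.mp h0 with hz | hz
  · have := hl i; rw [hz, zero_mul] at this; exact zero_ne_one this
  · have := hl j; rw [← hlij, hz, mul_zero] at this; exact zero_ne_one this
end
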